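/- arXiv:2110.12336 — 8 statements merged into one kernel-verified Lean document; each statement's English description precedes it below -/
import Mathlib

section
/- Let (Ω, 𝓕, P) be a probability space, A : Ω → {0,1}, Y⁽⁰⁾, Y⁽¹⁾ : Ω → ℝ with |Y⁽⁰⁾|, |Y⁽¹⁾| ≤ M almost surely, 𝓖_X ⊆ 𝓕 a sub-σ-algebra, and Y := A·Y⁽¹⁾ + (1−A)·Y⁽⁰⁾. Assume (Y⁽⁰⁾, Y⁽¹⁾) and A are conditionally independent given 𝓖_X, and the overlap condition: a version π₁ of E[A | 𝓖_X] satisfies π₁ ∈ [1/M, 1 − 1/M] almost surely; set π₀ := 1 − π₁. Let μ₁, μ₀ be 𝓖_X-measurable functions with μ₁·π₁ = E[A·Y | 𝓖_X] a.s. and μ₀·π₀ = E[(1−A)·Y | 𝓖_X] a.s. Then E[Y⁽¹⁾ − Y⁽⁰⁾] = E[μ₁ − μ₀]; i.e., the counterfactual definition of the average treatment effect, Δ* = E[Y⁽¹⁾ − Y⁽⁰⁾], coincides with the outcome-regression definition Δ* = E{E(Y | X, A = 1) − E(Y | X, A = 0)}. -/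
/-!
Conditional independence lets `𝔼[A·Y⁽¹⁾ | 𝓖_X]` be computed fibrewise under the conditional
expectation kernel, where it factors as `π₁ · 𝔼[Y⁽¹⁾ | 𝓖_X]`. By consistency `A·Y = A·Y⁽¹⁾`, so
`μ₁ π₁ = π₁ 𝔼[Y⁽¹⁾ | 𝓖_X]`, and overlap (`π₁ ≥ 1/M > 0`) cancels `π₁`: `μ₁` is a version of
`𝔼[Y⁽¹⁾ | 𝓖_X]`. Symmetrically (with `1 - A`) `μ₀` is a version of `𝔼[Y⁽⁰⁾ | 𝓖_X]`, and the
tower property gives `E[μ₁ - μ₀] = E[Y⁽¹⁾ - Y⁽⁰⁾]`.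
-/

open MeasureTheory ProbabilityTheory

theorem MeasureTheory.condExp_one_sub {α : Type*} {m m₀ : MeasurableSpace α} {μ : Measure α}
    [IsFiniteMeasure μ] (hm : m ≤ m₀) {f : α → ℝ} (hf : Integrable f μ) :
    μ[1 - f | m] =ᵐ[μ] 1 - μ[f | m] := by
  have h := condExp_sub (integrable_const 1) hf m
  rwa [condExp_const hm] at h

namespace ProbabilityTheory.CondIndepFun

variable {Ω : Type*} {m mΩ : MeasurableSpace Ω} [StandardBorelSpace Ω] {hm : m ≤ mΩ}
  {μ : Measure Ω} [IsFiniteMeasure μ]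

theorem condExp_mul {X Z : Ω → ℝ} (hX : Measurable X) (hZ : Measurable Z)
    (hXZ : CondIndepFun m hm X Z μ) (hXi : Integrable X μ) (hZi : Integrable Z μ)
    (hXZi : Integrable (X * Z) μ) :
    μ[X * Z | m] =ᵐ[μ] μ[X | m] * μ[Z | m] := by
  rw [condIndepFun_iff_map_prod_eq_prod_map_map hX hZ] at hXZ
  filter_upwards [condExp_ae_eq_integral_condExpKernel hm hXZi,
    condExp_ae_eq_integral_condExpKernel hm hXi, condExp_ae_eq_integral_condExpKernel hm hZi,
    ae_of_ae_trim hm hXZ] with ω hXZω hXω hZω hprod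
  set κ := condExpKernel μ m
  calc μ[X * Z | m] ω = ∫ p : ℝ × ℝ, p.1 * p.2 ∂(κ.map fun ω ↦ (X ω, Z ω)) ω := by
        rw [hXZω, Kernel.map_apply _ (hX.prodMk hZ),
          integral_map (hX.prodMk hZ).aemeasurable (by fun_prop)]
        rfl
    _ = (∫ x, x ∂κ.map X ω) * ∫ z, z ∂κ.map Z ω := by
        rw [hprod, Kernel.prod_apply]
        exact integral_prod_mul id id
    _ = (μ[X | m] * μ[Z | m]) ω := by
        rw [Pi.mul_apply, hXω, hZω, Kernel.map_apply _ hX, Kernel.map_apply _ hZ,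
          integral_map hX.aemeasurable (by fun_prop), integral_map hZ.aemeasurable (by fun_prop)]

theorem ae_eq_condExp_of_mul_eq_condExp_mul {W B ρ ν : Ω → ℝ} (hW : Measurable W)
    (hB : Measurable B) (hWB : CondIndepFun m hm W B μ) (hWi : Integrable W μ) {C : ℝ}
    (hBC : ∀ᵐ ω ∂μ, ‖B ω‖ ≤ C) (hρ : ρ =ᵐ[μ] μ[B | m]) (hρ0 : ∀ᵐ ω ∂μ, ρ ω ≠ 0)
    (hν : ν * ρ =ᵐ[μ] μ[B * W | m]) :
    ν =ᵐ[μ] μ[W | m] := by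
  have hBi : Integrable B μ := .of_bound hB.aestronglyMeasurable C hBC
  have hBWi : Integrable (B * W) μ := hWi.bdd_mul hB.aestronglyMeasurable hBC
  filter_upwards [hν, hWB.symm.condExp_mul hB hW hBi hWi hBWi, hρ, hρ0]
    with ω hνω hmul hρω hρω0
  refine mul_right_cancel₀ hρω0 ?_
  rw [← Pi.mul_apply, hνω, hmul, Pi.mul_apply, hρω, mul_comm]

end ProbabilityTheory.CondIndepFun

theorem ate_counterfactual_eq_outcome_regression_general
    {Ω : Type*} (𝓖X : MeasurableSpace Ω) [mF : MeasurableSpace Ω] [StandardBorelSpace Ω]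
    (P : Measure Ω) [IsProbabilityMeasure P]
    (h𝓖X : 𝓖X ≤ mF)
    (M : ℝ) (hM : 1 < M)
    (A Y0 Y1 : Ω → ℝ)
    (hA : Measurable A) (hAbin : ∀ ω, A ω = 0 ∨ A ω = 1)
    (hY0 : Measurable Y0) (hY1 : Measurable Y1)
    (hY0bdd : ∀ᵐ ω ∂P, |Y0 ω| ≤ M) (hY1bdd : ∀ᵐ ω ∂P, |Y1 ω| ≤ M)
    (hignore : CondIndepFun 𝓖X h𝓖X (fun ω => (Y0 ω, Y1 ω)) A P)
    (Y : Ω → ℝ) (hY : ∀ ω, Y ω = A ω * Y1 ω + (1 - A ω) * Y0 ω)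
    (π1 μ1 μ0 : Ω → ℝ)
    (hπ1 : π1 =ᵐ[P] P[A|𝓖X])
    (hoverlap : ∀ᵐ ω ∂P, π1 ω ∈ Set.Icc (1 / M) (1 - 1 / M))
    (hμ1 : (fun ω => μ1 ω * π1 ω) =ᵐ[P] P[fun ω => A ω * Y ω|𝓖X])
    (hμ0 : (fun ω => μ0 ω * (1 - π1 ω)) =ᵐ[P] P[fun ω => (1 - A ω) * Y ω|𝓖X]) :
    ∫ ω, (Y1 ω - Y0 ω) ∂P = ∫ ω, (μ1 ω - μ0 ω) ∂P := by
  have hAY1 : (fun ω => A ω * Y ω) = A * Y1 := by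
    ext ω; rcases hAbin ω with h | h <;> simp [hY, h]
  have hAY0 : (fun ω => (1 - A ω) * Y ω) = (1 - A) * Y0 := by
    ext ω; rcases hAbin ω with h | h <;> simp [hY, h]
  have hA1 : ∀ ω, ‖A ω‖ ≤ 1 := fun ω => by rcases hAbin ω with h | h <;> simp [h]
  have hA0 : ∀ ω, ‖(1 - A) ω‖ ≤ 1 := fun ω => by rcases hAbin ω with h | h <;> simp [h]
  have hY1i : Integrable Y1 P :=
    .of_bound hY1.aestronglyMeasurable M (by simpa only [Real.norm_eq_abs] using hY1bdd)
  have hY0i : Integrable Y0 P :=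
    .of_bound hY0.aestronglyMeasurable M (by simpa only [Real.norm_eq_abs] using hY0bdd)
  have hπ0 : 1 - π1 =ᵐ[P] P[1 - A|𝓖X] := (Filter.EventuallyEq.rfl.sub hπ1).trans
    (condExp_one_sub h𝓖X (.of_bound hA.aestronglyMeasurable 1 (.of_forall hA1))).symm
  have hπne : ∀ᵐ ω ∂P, π1 ω ≠ 0 ∧ (1 - π1) ω ≠ 0 := by
    filter_upwards [hoverlap] with ω ⟨hlow, hhigh⟩
    have hM0 : 0 < 1 / M := by positivity
    refine ⟨(hM0.trans_le hlow).ne', ?_⟩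
    rw [Pi.sub_apply, Pi.one_apply, sub_ne_zero]
    exact (hhigh.trans_lt (by linarith)).ne'
  have hind1 : CondIndepFun 𝓖X h𝓖X Y1 A P := hignore.comp measurable_snd measurable_id
  have hind0 : CondIndepFun 𝓖X h𝓖X Y0 (1 - A) P :=
    hignore.comp measurable_fst (measurable_const.sub measurable_id)
  have hμ1Y1 : μ1 =ᵐ[P] P[Y1|𝓖X] := hind1.ae_eq_condExp_of_mul_eq_condExp_mul hY1 hA hY1i
    (.of_forall hA1) hπ1 (hπne.mono fun _ h => h.1) (hAY1 ▸ hμ1)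
  have hμ0Y0 : μ0 =ᵐ[P] P[Y0|𝓖X] := hind0.ae_eq_condExp_of_mul_eq_condExp_mul hY0
    (measurable_const.sub hA) hY0i (.of_forall hA0) hπ0 (hπne.mono fun _ h => h.2) (hAY0 ▸ hμ0)
  calc ∫ ω, (Y1 ω - Y0 ω) ∂P = ∫ ω, (P[Y1|𝓖X] ω - P[Y0|𝓖X] ω) ∂P := by
        rw [integral_sub hY1i hY0i, integral_sub integrable_condExp integrable_condExp,
          integral_condExp h𝓖X, integral_condExp h𝓖X]
    _ = ∫ ω, (μ1 ω - μ0 ω) ∂P := integral_congr_ae (hμ1Y1.sub hμ0Y0).symm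

/-- **Equivalence of the counterfactual and outcome-regression definitions of the ATE.**
Under consistency, ignorability and overlap, `E[Y⁽¹⁾ − Y⁽⁰⁾] = E[μ₁ − μ₀]`, where
`π₁ = E[A ∣ 𝓖X]` is the propensity score, `π₀ = 1 − π₁`, and `μₐ` are the `𝓖X`-measurable
outcome regressions characterized by `μ₁·π₁ = E[A·Y ∣ 𝓖X]` and `μ₀·π₀ = E[(1−A)·Y ∣ 𝓖X]` a.s. -/
theorem ate_counterfactual_eq_outcome_regression
    {Ω : Type*} (𝓖X : MeasurableSpace Ω) [mF : MeasurableSpace Ω] [StandardBorelSpace Ω]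
    (P : Measure Ω) [IsProbabilityMeasure P]
    (h𝓖X : 𝓖X ≤ mF)
    (M : ℝ) (hM : 1 < M)
    (A Y0 Y1 : Ω → ℝ)
    (hA : Measurable A) (hAbin : ∀ ω, A ω = 0 ∨ A ω = 1)
    (hY0 : Measurable Y0) (hY1 : Measurable Y1)
    (hY0bdd : ∀ᵐ ω ∂P, |Y0 ω| ≤ M) (hY1bdd : ∀ᵐ ω ∂P, |Y1 ω| ≤ M)
    (hignore : CondIndepFun 𝓖X h𝓖X (fun ω => (Y0 ω, Y1 ω)) A P)
    (Y : Ω → ℝ) (hY : ∀ ω, Y ω = A ω * Y1 ω + (1 - A ω) * Y0 ω)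
    (π1 μ1 μ0 : Ω → ℝ)
    (hπ1meas : Measurable[𝓖X] π1) (hπ1 : π1 =ᵐ[P] P[A|𝓖X])
    (hoverlap : ∀ᵐ ω ∂P, π1 ω ∈ Set.Icc (1 / M) (1 - 1 / M))
    (hμ1meas : Measurable[𝓖X] μ1) (hμ0meas : Measurable[𝓖X] μ0)
    (hμ1 : (fun ω => μ1 ω * π1 ω) =ᵐ[P] P[fun ω => A ω * Y ω|𝓖X])
    (hμ0 : (fun ω => μ0 ω * (1 - π1 ω)) =ᵐ[P] P[fun ω => (1 - A ω) * Y ω|𝓖X]) :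
    ∫ ω, (Y1 ω - Y0 ω) ∂P = ∫ ω, (μ1 ω - μ0 ω) ∂P :=
  ate_counterfactual_eq_outcome_regression_general 𝓖X (mF := mF) P h𝓖X M hM A Y0 Y1 hA hAbin hY0 hY1
    hY0bdd hY1bdd hignore Y hY π1 μ1 μ0 hπ1 hoverlap hμ1 hμ0
end

section
/- Let (Ω, 𝓕, P) be a probability space, 𝓖 ⊆ 𝓕 and 𝓖_W ⊆ 𝓖 sub-σ-algebras, φ a square-integrable 𝓖-measurable real random variable with E[φ] = 0, and g a version of E[φ | 𝓖_W]. Let R : Ω → {0,1} with E[R] = ρ ∈ (0,1) and σ(R) independent of 𝓖. Then the variance of φ_SSL := g + (R/ρ)(φ − g) satisfies the exact identity ρ·Var(φ_SSL) = E[φ²] − (1 − ρ)·E[g²]. In particular, along any sequence ρ_N → 0, ρ_N·Var(φ_SSL) → Var(φ) − Var(E[φ | 𝓖_W]). -/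
open MeasureTheory ProbabilityTheory Filter

/-! Since `R / ρ` has mean one, `φ_SSL = φ + (R / ρ - 1) (φ - g)`: the variable `φ` plus centred
noise, independent of `𝓖`, times the `𝓖`-measurable `φ - g`. Independence kills the cross term, so
the variance of `φ` grows by `E[(R / ρ - 1)²] E[(φ - g)²] = (ρ⁻¹ - 1) (E[φ²] - E[g²])`, the last
factor by Pythagoras for the orthogonal projection `g` of `φ`. -/

section

variable {Ω : Type*} {m m0 : MeasurableSpace Ω} {μ : Measure Ω} [IsFiniteMeasure μ]

lemma integral_sq_sub_eq_of_ae_eq_condExp (hm : m ≤ m0) {φ g : Ω → ℝ} (hφ : MemLp φ 2 μ)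
    (hgm : StronglyMeasurable[m] g) (hg : g =ᵐ[μ] μ[φ|m]) :
    ∫ ω, (φ ω - g ω) ^ 2 ∂μ = ∫ ω, φ ω ^ 2 ∂μ - ∫ ω, g ω ^ 2 ∂μ := by
  have hgL2 : MemLp g 2 μ := (hφ.condExp one_le_two).ae_eq hg.symm
  have hgφ : Integrable (fun ω => g ω * φ ω) μ := hgL2.integrable_mul hφ
  have hcross : ∫ ω, g ω * φ ω ∂μ = ∫ ω, g ω ^ 2 ∂μ :=
    calc ∫ ω, g ω * φ ω ∂μ = ∫ ω, (μ[g * φ|m]) ω ∂μ := (integral_condExp hm).symm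
      _ = ∫ ω, (g * μ[φ|m]) ω ∂μ := integral_congr_ae <|
        condExp_mul_of_stronglyMeasurable_left hgm hgφ (hφ.integrable one_le_two)
      _ = ∫ ω, g ω ^ 2 ∂μ := integral_congr_ae (by filter_upwards [hg] with ω hω; simp [← hω, sq])
  have hexpand : (fun ω => (φ ω - g ω) ^ 2) = fun ω => φ ω ^ 2 - 2 * (g ω * φ ω) + g ω ^ 2 := by
    funext ω; ring
  have hφ2 : Integrable (fun ω => φ ω ^ 2 - 2 * (g ω * φ ω)) μ :=
    hφ.integrable_sq.sub (hgφ.const_mul 2)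
  rw [hexpand, integral_add hφ2 hgL2.integrable_sq,
    integral_sub hφ.integrable_sq (hgφ.const_mul 2), integral_const_mul, hcross]
  ring

end

section

variable {Ω : Type*} {𝓖 : MeasurableSpace Ω} [mΩ : MeasurableSpace Ω] {P : Measure Ω}

lemma integral_mul_eq_mul_integral_of_indep {T u : Ω → ℝ}
    (hT : Indep (MeasurableSpace.comap T inferInstance) 𝓖 P) (h𝓖 : 𝓖 ≤ mΩ)
    (hTm : AEStronglyMeasurable T P) (hu : Measurable[𝓖] u) :
    ∫ ω, T ω * u ω ∂P = (∫ ω, T ω ∂P) * ∫ ω, u ω ∂P :=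
  IndepFun.integral_fun_mul_eq_mul_integral (indep_of_indep_of_le_right hT hu.comap_le) hTm
    (hu.mono h𝓖 le_rfl).aestronglyMeasurable

variable [IsProbabilityMeasure P]

lemma variance_add_mul_of_indep {T Y h : Ω → ℝ}
    (hT : Indep (MeasurableSpace.comap T inferInstance) 𝓖 P) (h𝓖 : 𝓖 ≤ mΩ)
    (hTbdd : MemLp T ⊤ P) (hT0 : ∫ ω, T ω ∂P = 0)
    (hYm : Measurable[𝓖] Y) (hY : MemLp Y 2 P) (hhm : Measurable[𝓖] h) (hh : MemLp h 2 P) :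
    variance (fun ω => Y ω + T ω * h ω) P
      = variance Y P + (∫ ω, T ω ^ 2 ∂P) * ∫ ω, h ω ^ 2 ∂P := by
  have hT2 : Indep (MeasurableSpace.comap (fun ω => T ω ^ 2) inferInstance) 𝓖 P :=
    indep_of_indep_of_le_left hT ((comap_measurable T).pow_const 2).comap_le
  have hTh : MemLp (fun ω => T ω * h ω) 2 P := hh.mul hTbdd
  have hYh : Integrable (fun ω => T ω * (Y ω * h ω)) P :=
    (hY.integrable_mul hh).mul_of_top_right hTbdd
  have hmean : ∫ ω, (Y ω + T ω * h ω) ∂P = ∫ ω, Y ω ∂P := by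
    rw [integral_add (hY.integrable one_le_two) (hTh.integrable one_le_two),
      integral_mul_eq_mul_integral_of_indep hT h𝓖 hTbdd.aestronglyMeasurable hhm, hT0]
    ring
  have hsecond : ∫ ω, (Y ω + T ω * h ω) ^ 2 ∂P
      = ∫ ω, Y ω ^ 2 ∂P + (∫ ω, T ω ^ 2 ∂P) * ∫ ω, h ω ^ 2 ∂P := by
    have hexpand : (fun ω => (Y ω + T ω * h ω) ^ 2)
        = fun ω => Y ω ^ 2 + 2 * (T ω * (Y ω * h ω)) + T ω ^ 2 * h ω ^ 2 := by
      funext ω; ring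
    have hT2h2 : Integrable (fun ω => T ω ^ 2 * h ω ^ 2) P := by
      simpa only [mul_pow] using hTh.integrable_sq
    have hY2 : Integrable (fun ω => Y ω ^ 2 + 2 * (T ω * (Y ω * h ω))) P :=
      hY.integrable_sq.add (hYh.const_mul 2)
    rw [hexpand, integral_add hY2 hT2h2,
      integral_add hY.integrable_sq (hYh.const_mul 2), integral_const_mul,
      integral_mul_eq_mul_integral_of_indep (u := fun ω => Y ω * h ω) hT h𝓖
        hTbdd.aestronglyMeasurable (hYm.mul hhm),
      integral_mul_eq_mul_integral_of_indep hT2 h𝓖 (hTbdd.aestronglyMeasurable.pow 2)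
        (hhm.pow_const 2), hT0]
    ring
  rw [variance_eq_sub (X := fun ω => Y ω + T ω * h ω) (hY.add hTh), variance_eq_sub hY]
  simp only [Pi.pow_apply, hmean, hsecond]
  ring

lemma integral_div_sub_one_sq_of_binary {R : Ω → ℝ} {ρ : ℝ} (hρ : ρ ≠ 0)
    (hR : Integrable R P) (hRbin : ∀ ω, R ω = 0 ∨ R ω = 1) (hRmean : ∫ ω, R ω ∂P = ρ) :
    ∫ ω, (R ω / ρ - 1) ^ 2 ∂P = ρ⁻¹ - 1 := by
  have hexpand : (fun ω => (R ω / ρ - 1) ^ 2) = fun ω => (ρ⁻¹ ^ 2 - 2 * ρ⁻¹) * R ω + 1 := by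
    funext ω
    rcases hRbin ω with h | h <;> rw [h] <;> ring
  rw [hexpand, integral_add (hR.const_mul _) (integrable_const 1), integral_const_mul, hRmean]
  simp only [integral_const, probReal_univ, smul_eq_mul, mul_one]
  field_simp
  ring

end

lemma mul_variance_ssl_eq {Ω : Type*} (𝓖 𝓖W : MeasurableSpace Ω) [mF : MeasurableSpace Ω]
    (P : Measure Ω) [IsProbabilityMeasure P] (h𝓖 : 𝓖 ≤ mF) (h𝓖W : 𝓖W ≤ 𝓖)
    {φ g : Ω → ℝ} (hφmeas : Measurable[𝓖] φ) (hφL2 : MemLp φ 2 P) (hφmean : ∫ ω, φ ω ∂P = 0)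
    (hgmeas : Measurable[𝓖W] g) (hg : g =ᵐ[P] P[φ|𝓖W])
    {ρ : ℝ} (hρ : ρ ≠ 0) {R : Ω → ℝ} (hRmeas : Measurable R) (hRbin : ∀ ω, R ω = 0 ∨ R ω = 1)
    (hRmean : ∫ ω, R ω ∂P = ρ) (hindep : Indep (MeasurableSpace.comap R inferInstance) 𝓖 P) :
    ρ * variance (fun ω => g ω + (R ω / ρ) * (φ ω - g ω)) P
      = (∫ ω, φ ω ^ 2 ∂P) - (1 - ρ) * ∫ ω, g ω ^ 2 ∂P := by
  have hR : MemLp R ⊤ P := memLp_top_of_bound hRmeas.aestronglyMeasurable 1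
    (ae_of_all _ fun ω => by rcases hRbin ω with h | h <;> simp [h])
  have hgL2 : MemLp g 2 P := (hφL2.condExp one_le_two).ae_eq hg.symm
  have hgG : Measurable[𝓖] g := hgmeas.mono h𝓖W le_rfl
  have hT : Indep (MeasurableSpace.comap (fun ω => R ω / ρ - 1) inferInstance) 𝓖 P :=
    indep_of_indep_of_le_left hindep
      (((comap_measurable R).div_const ρ).sub_const 1).comap_le
  have hT0 : ∫ ω, (R ω / ρ - 1) ∂P = 0 := by
    rw [integral_sub ((hR.integrable le_top).div_const ρ) (integrable_const 1),
      integral_div, hRmean]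
    simp [hρ]
  have hrewrite : (fun ω => g ω + (R ω / ρ) * (φ ω - g ω))
      = fun ω => φ ω + (R ω / ρ - 1) * (φ ω - g ω) := by
    funext ω; ring
  rw [hrewrite, variance_add_mul_of_indep (h := fun ω => φ ω - g ω) hT h𝓖
      ((hR.mul_const ρ⁻¹).sub (memLp_const 1)) hT0 hφmeas hφL2 (hφmeas.sub hgG) (hφL2.sub hgL2),
    integral_div_sub_one_sq_of_binary hρ (hR.integrable le_top) hRbin hRmean,
    integral_sq_sub_eq_of_ae_eq_condExp (h𝓖W.trans h𝓖) hφL2 hgmeas.stronglyMeasurable hg,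
    variance_of_integral_eq_zero hφL2.aemeasurable hφmean]
  field_simp
  ring

/-- **Variance identity for the semi-supervised influence function.**
For `𝓖W ⊆ 𝓖 ⊆ 𝓕`, square-integrable `𝓖`-measurable `φ` with `E[φ] = 0`, `g` a version of
`E[φ ∣ 𝓖W]`, and an MCAR labeling indicator `R ∈ {0,1}` with `E[R] = ρ ∈ (0,1)` and `σ(R)`
independent of `𝓖`: `ρ·Var(g + (R/ρ)(φ−g)) = E[φ²] − (1−ρ)·E[g²]`.  In particular, along any
sequence of labeling indicators with rates `ρ_N → 0`,
`ρ_N·Var(φ_SSL,N) → Var(φ) − Var(E[φ ∣ 𝓖W])`. -/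
theorem ssl_variance_identity
    {Ω : Type*} (𝓖 𝓖W : MeasurableSpace Ω) [mF : MeasurableSpace Ω]
    (P : Measure Ω) [IsProbabilityMeasure P]
    (h𝓖 : 𝓖 ≤ mF) (h𝓖W : 𝓖W ≤ 𝓖)
    (φ g : Ω → ℝ)
    (hφmeas : Measurable[𝓖] φ) (hφL2 : MemLp φ 2 P)
    (hφmean : ∫ ω, φ ω ∂P = 0)
    (hgmeas : Measurable[𝓖W] g) (hg : g =ᵐ[P] P[φ|𝓖W])
    (ρ : ℝ) (hρ : ρ ∈ Set.Ioo (0 : ℝ) 1)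
    (R : Ω → ℝ) (hRmeas : Measurable R) (hRbin : ∀ ω, R ω = 0 ∨ R ω = 1)
    (hRmean : ∫ ω, R ω ∂P = ρ)
    (hindep : Indep (MeasurableSpace.comap R inferInstance) 𝓖 P) :
    ρ * variance (fun ω => g ω + (R ω / ρ) * (φ ω - g ω)) P
      = (∫ ω, (φ ω) ^ 2 ∂P) - (1 - ρ) * ∫ ω, (g ω) ^ 2 ∂P ∧
    ∀ (ρs : ℕ → ℝ) (Rs : ℕ → Ω → ℝ),
      (∀ N, ρs N ∈ Set.Ioo (0 : ℝ) 1) →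
      (∀ N, Measurable (Rs N)) →
      (∀ N ω, Rs N ω = 0 ∨ Rs N ω = 1) →
      (∀ N, ∫ ω, Rs N ω ∂P = ρs N) →
      (∀ N, Indep (MeasurableSpace.comap (Rs N) inferInstance) 𝓖 P) →
      Tendsto ρs atTop (nhds 0) →
      Tendsto (fun N => ρs N * variance (fun ω => g ω + (Rs N ω / ρs N) * (φ ω - g ω)) P)
        atTop (nhds (variance φ P - variance g P)) := by
  refine ⟨mul_variance_ssl_eq 𝓖 𝓖W P h𝓖 h𝓖W hφmeas hφL2 hφmean hgmeas hg hρ.1.ne'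
    hRmeas hRbin hRmean hindep, fun ρs Rs hρs hRsmeas hRsbin hRsmean hRsindep hρs0 => ?_⟩
  have hgmean : ∫ ω, g ω ∂P = 0 := by
    rw [integral_congr_ae hg, integral_condExp (h𝓖W.trans h𝓖), hφmean]
  have hlim : Tendsto (fun N => (∫ ω, φ ω ^ 2 ∂P) - (1 - ρs N) * ∫ ω, g ω ^ 2 ∂P)
      atTop (nhds ((∫ ω, φ ω ^ 2 ∂P) - (1 - 0) * ∫ ω, g ω ^ 2 ∂P)) :=
    tendsto_const_nhds.sub ((tendsto_const_nhds.sub hρs0).mul tendsto_const_nhds)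
  rw [variance_of_integral_eq_zero hφL2.aemeasurable hφmean,
    variance_of_integral_eq_zero (hgmeas.mono (h𝓖W.trans h𝓖) le_rfl).aemeasurable hgmean]
  simpa using hlim.congr fun N => (mul_variance_ssl_eq 𝓖 𝓖W P h𝓖 h𝓖W hφmeas hφL2 hφmean
    hgmeas hg (hρs N).1.ne' (hRsmeas N) (hRsbin N) (hRsmean N) (hRsindep N)).symm
end

section
/- Let (Ω, 𝓕, P) be a probability space, 𝓖 ⊆ 𝓕 and 𝓖_W ⊆ 𝓖 sub-σ-algebras, φ a square-integrable 𝓖-measurable real random variable, and g a version of E[φ | 𝓖_W]. Let R : Ω → {0,1} with E[R] = ρ ∈ (0,1) and σ(R) independent of 𝓖. For any square-integrable 𝓖_W-measurable h, define T_h := h + (R/ρ)(φ − h). Then Var(T_h) = Var(T_g) + (1/ρ − 1)·E[(h − g)²]. Consequently, among all augmentations h ∈ L²(𝓖_W), the variance of T_h is uniquely minimized (up to almost-sure equality) at h = g = E[φ | 𝓖_W]. -/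
/-!
With `c = 1 - R / ρ` we have `T_h = φ + c (h - φ)`. The weight `c` is independent of `𝓖`, has
mean `0` and, since `R² = R`, second moment `1/ρ - 1`; hence
`Var T_h = Var φ + (1/ρ - 1) E[(h - φ)²]`. As `φ - g` is orthogonal to `L²(𝓖W)`, Pythagoras gives
`E[(h - φ)²] = E[(g - φ)²] + E[(h - g)²]`, and subtracting the two variances leaves
`(1/ρ - 1) E[(h - g)²]`, which is positive unless `h = g` a.e.
-/

open MeasureTheory ProbabilityTheory

section Independence

variable {Ω : Type*} {m 𝓖 : MeasurableSpace Ω} [mΩ : MeasurableSpace Ω] {P : Measure Ω}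

theorem ProbabilityTheory.Indep.integral_mul_eq_mul_integral (hind : Indep m 𝓖 P)
    {X Y : Ω → ℝ} (hXm : Measurable[m] X) (hYm : Measurable[𝓖] Y)
    (hX : AEStronglyMeasurable X P) (hY : AEStronglyMeasurable Y P) :
    ∫ ω, X ω * Y ω ∂P = (∫ ω, X ω ∂P) * ∫ ω, Y ω ∂P := by
  have hXY : IndepFun X Y P := by
    rw [IndepFun_iff_Indep]
    exact indep_of_indep_of_le_right (indep_of_indep_of_le_left hind hXm.comap_le) hYm.comap_le
  exact hXY.integral_fun_mul_eq_mul_integral hX hY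

theorem variance_add_mul_of_indep_s9 [IsProbabilityMeasure P] (hind : Indep m 𝓖 P)
    {c φ ψ : Ω → ℝ} (hcm : Measurable[m] c) (hc : MemLp c ⊤ P) (hc0 : ∫ ω, c ω ∂P = 0)
    (hφm : Measurable[𝓖] φ) (hφ : MemLp φ 2 P) (hψm : Measurable[𝓖] ψ) (hψ : MemLp ψ 2 P) :
    Var[fun ω ↦ φ ω + c ω * ψ ω; P]
      = Var[φ; P] + (∫ ω, c ω ^ 2 ∂P) * ∫ ω, ψ ω ^ 2 ∂P := by
  have hcψ : MemLp (fun ω ↦ c ω * ψ ω) 2 P := hψ.mul' hc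
  have hmean : ∫ ω, c ω * ψ ω ∂P = 0 := by
    rw [hind.integral_mul_eq_mul_integral hcm hψm hc.1 hψ.1, hc0, zero_mul]
  have hcross : ∫ ω, φ ω * (c ω * ψ ω) ∂P = 0 := by
    simp_rw [mul_left_comm (φ _)]
    rw [hind.integral_mul_eq_mul_integral (Y := fun ω ↦ φ ω * ψ ω) hcm (hφm.mul hψm) hc.1
      (hφ.1.mul hψ.1), hc0, zero_mul]
  have hsq : ∫ ω, (c ω * ψ ω) ^ 2 ∂P = (∫ ω, c ω ^ 2 ∂P) * ∫ ω, ψ ω ^ 2 ∂P := by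
    simp_rw [mul_pow]
    exact hind.integral_mul_eq_mul_integral (hcm.pow_const 2) (hψm.pow_const 2)
      (hc.1.pow 2) (hψ.1.pow 2)
  rw [variance_fun_add hφ hcψ, covariance_eq_sub hφ hcψ, variance_eq_sub hcψ]
  simp only [Pi.mul_apply, Pi.pow_apply, hmean, hcross, hsq]
  ring

end Independence

section CondExp

variable {Ω : Type*} {m : MeasurableSpace Ω} [mΩ : MeasurableSpace Ω] {P : Measure Ω}
  [IsFiniteMeasure P]

theorem integral_mul_sub_condExp_eq_zero (hm : m ≤ mΩ) {k φ : Ω → ℝ}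
    (hkm : StronglyMeasurable[m] k) (hk : MemLp k 2 P) (hφ : MemLp φ 2 P) :
    ∫ ω, k ω * (φ ω - P[φ|m] ω) ∂P = 0 := by
  have hkφ : Integrable (fun ω ↦ k ω * φ ω) P := hk.integrable_mul hφ
  have hpull : ∫ ω, k ω * φ ω ∂P = ∫ ω, k ω * P[φ|m] ω ∂P := calc
    ∫ ω, k ω * φ ω ∂P = ∫ ω, P[k * φ|m] ω ∂P := (integral_condExp hm).symm
    _ = ∫ ω, k ω * P[φ|m] ω ∂P :=
      integral_congr_ae (condExp_mul_of_stronglyMeasurable_left hkm hkφ (hφ.integrable one_le_two))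
  have hkE : Integrable (fun ω ↦ k ω * P[φ|m] ω) P := hk.integrable_mul (hφ.condExp one_le_two)
  simp_rw [mul_sub]
  rw [integral_sub hkφ hkE, hpull, sub_self]

theorem integral_sq_sub_eq_add_of_ae_eq_condExp (hm : m ≤ mΩ) {φ g h : Ω → ℝ}
    (hφ : MemLp φ 2 P) (hgm : Measurable[m] g) (hg : g =ᵐ[P] P[φ|m])
    (hhm : Measurable[m] h) (hh : MemLp h 2 P) :
    ∫ ω, (h ω - φ ω) ^ 2 ∂P = ∫ ω, (g ω - φ ω) ^ 2 ∂P + ∫ ω, (h ω - g ω) ^ 2 ∂P := by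
  have hgL2 : MemLp g 2 P := (hφ.condExp one_le_two).ae_eq hg.symm
  have horth : ∫ ω, (h ω - g ω) * (φ ω - g ω) ∂P = 0 := by
    rw [← integral_mul_sub_condExp_eq_zero hm (hhm.sub hgm).stronglyMeasurable (hh.sub hgL2) hφ]
    refine integral_congr_ae ?_
    filter_upwards [hg] with ω hω
    simp only [Pi.sub_apply, hω]
  have hexpand : ∀ ω, (h ω - φ ω) ^ 2
      = (g ω - φ ω) ^ 2 + ((h ω - g ω) ^ 2 - 2 * ((h ω - g ω) * (φ ω - g ω))) := fun ω ↦ by ring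
  have hgφ : Integrable (fun ω ↦ (g ω - φ ω) ^ 2) P := (hgL2.sub hφ).integrable_sq
  have hhg : Integrable (fun ω ↦ (h ω - g ω) ^ 2) P := (hh.sub hgL2).integrable_sq
  have hcross : Integrable (fun ω ↦ 2 * ((h ω - g ω) * (φ ω - g ω))) P :=
    ((hh.sub hgL2).integrable_mul (hφ.sub hgL2)).const_mul 2
  simp_rw [hexpand]
  rw [integral_add hgφ (hhg.sub' hcross), integral_sub hhg hcross, integral_const_mul, horth]
  ring

end CondExp

theorem integral_sq_sub_eq_zero_iff {Ω : Type*} [MeasurableSpace Ω] {P : Measure Ω}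
    {f g : Ω → ℝ} (hf : MemLp f 2 P) (hg : MemLp g 2 P) :
    ∫ ω, (f ω - g ω) ^ 2 ∂P = 0 ↔ f =ᵐ[P] g := by
  have hfg : Integrable (fun ω ↦ (f ω - g ω) ^ 2) P := (hf.sub hg).integrable_sq
  rw [integral_eq_zero_iff_of_nonneg (fun ω ↦ sq_nonneg _) hfg]
  refine Filter.eventually_congr (Filter.Eventually.of_forall fun ω ↦ ?_)
  simp [sub_eq_zero]

section Labeling

variable {Ω : Type*} {𝓖 : MeasurableSpace Ω} [mΩ : MeasurableSpace Ω] {P : Measure Ω}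
  {R : Ω → ℝ} {ρ : ℝ}

theorem memLp_top_of_forall_eq_zero_or_eq_one (hRm : Measurable R)
    (hR : ∀ ω, R ω = 0 ∨ R ω = 1) : MemLp R ⊤ P :=
  memLp_top_of_bound hRm.aestronglyMeasurable 1
    (ae_of_all _ fun ω ↦ by rcases hR ω with h | h <;> simp [h])

variable [IsProbabilityMeasure P]

theorem integral_one_sub_div_eq_zero (hRm : Measurable R) (hR : ∀ ω, R ω = 0 ∨ R ω = 1)
    (hmean : ∫ ω, R ω ∂P = ρ) (hρ : ρ ≠ 0) : ∫ ω, (1 - R ω / ρ) ∂P = 0 := by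
  have hRi : Integrable R P := (memLp_top_of_forall_eq_zero_or_eq_one hRm hR).integrable le_top
  rw [integral_sub (integrable_const 1) (hRi.div_const ρ), integral_div, hmean]
  simp [hρ]

theorem integral_one_sub_div_sq (hRm : Measurable R) (hR : ∀ ω, R ω = 0 ∨ R ω = 1)
    (hmean : ∫ ω, R ω ∂P = ρ) (hρ : ρ ≠ 0) : ∫ ω, (1 - R ω / ρ) ^ 2 ∂P = 1 / ρ - 1 := by
  have hRi : Integrable R P := (memLp_top_of_forall_eq_zero_or_eq_one hRm hR).integrable le_top
  have hlin : ∀ ω, (1 - R ω / ρ) ^ 2 = 1 + (1 / ρ ^ 2 - 2 / ρ) * R ω := fun ω ↦ by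
    rcases hR ω with h | h <;> rw [h] <;> field_simp <;> ring
  simp_rw [hlin]
  rw [integral_add (integrable_const 1) (hRi.const_mul _), integral_const_mul, hmean,
    integral_const, probReal_univ, one_smul]
  field_simp
  ring

theorem variance_augmentation_eq
    (hind : Indep (MeasurableSpace.comap R inferInstance) 𝓖 P) (hRm : Measurable R)
    (hR : ∀ ω, R ω = 0 ∨ R ω = 1) (hmean : ∫ ω, R ω ∂P = ρ) (hρ : ρ ≠ 0) {φ k : Ω → ℝ}
    (hφm : Measurable[𝓖] φ) (hφ : MemLp φ 2 P) (hkm : Measurable[𝓖] k) (hk : MemLp k 2 P) :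
    Var[fun ω ↦ k ω + R ω / ρ * (φ ω - k ω); P]
      = Var[φ; P] + (1 / ρ - 1) * ∫ ω, (k ω - φ ω) ^ 2 ∂P := by
  have hcm : Measurable[MeasurableSpace.comap R inferInstance] fun ω ↦ 1 - R ω / ρ :=
    measurable_const.sub ((comap_measurable R).div_const ρ)
  have hc : MemLp (fun ω ↦ 1 - R ω / ρ) ⊤ P :=
    (memLp_const 1).sub ((memLp_top_of_forall_eq_zero_or_eq_one hRm hR).mul_const ρ⁻¹)
  calc Var[fun ω ↦ k ω + R ω / ρ * (φ ω - k ω); P]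
      = Var[fun ω ↦ φ ω + (1 - R ω / ρ) * (k ω - φ ω); P] := by congr; ext ω; ring
    _ = Var[φ; P] + (1 / ρ - 1) * ∫ ω, (k ω - φ ω) ^ 2 ∂P := by
      rw [variance_add_mul_of_indep_s9 (ψ := fun ω ↦ k ω - φ ω) hind hcm hc
        (integral_one_sub_div_eq_zero hRm hR hmean hρ) hφm hφ (hkm.sub hφm) (hk.sub hφ),
        integral_one_sub_div_sq hRm hR hmean hρ]

end Labeling

/-- **Variance optimality of the augmentation `g = E[φ ∣ 𝓖W]`.**
For `𝓖W ⊆ 𝓖 ⊆ 𝓕`, square-integrable `𝓖`-measurable `φ`, `g` a version of `E[φ ∣ 𝓖W]`, and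
an MCAR labeling indicator `R ∈ {0,1}` with `E[R] = ρ ∈ (0,1)` and `σ(R)` independent of `𝓖`:
for any square-integrable `𝓖W`-measurable `h`, letting `T_h = h + (R/ρ)(φ − h)`,
`Var(T_h) = Var(T_g) + (1/ρ − 1)·E[(h − g)²]`; consequently the variance is minimized at
`h = g`, uniquely up to a.s. equality. -/
theorem ssl_augmentation_variance_optimality
    {Ω : Type*} (𝓖 𝓖W : MeasurableSpace Ω) [mF : MeasurableSpace Ω]
    (P : Measure Ω) [IsProbabilityMeasure P]
    (h𝓖 : 𝓖 ≤ mF) (h𝓖W : 𝓖W ≤ 𝓖)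
    (φ g : Ω → ℝ)
    (hφmeas : Measurable[𝓖] φ) (hφL2 : MemLp φ 2 P)
    (hgmeas : Measurable[𝓖W] g) (hg : g =ᵐ[P] P[φ|𝓖W])
    (ρ : ℝ) (hρ : ρ ∈ Set.Ioo (0 : ℝ) 1)
    (R : Ω → ℝ) (hRmeas : Measurable R) (hRbin : ∀ ω, R ω = 0 ∨ R ω = 1)
    (hRmean : ∫ ω, R ω ∂P = ρ)
    (hindep : Indep (MeasurableSpace.comap R inferInstance) 𝓖 P) :
    ∀ h : Ω → ℝ, Measurable[𝓖W] h → MemLp h 2 P →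
      variance (fun ω => h ω + (R ω / ρ) * (φ ω - h ω)) P
        = variance (fun ω => g ω + (R ω / ρ) * (φ ω - g ω)) P
          + (1 / ρ - 1) * ∫ ω, (h ω - g ω) ^ 2 ∂P ∧
      variance (fun ω => g ω + (R ω / ρ) * (φ ω - g ω)) P
        ≤ variance (fun ω => h ω + (R ω / ρ) * (φ ω - h ω)) P ∧
      (variance (fun ω => h ω + (R ω / ρ) * (φ ω - h ω)) P
        = variance (fun ω => g ω + (R ω / ρ) * (φ ω - g ω)) P ↔ h =ᵐ[P] g) := by
  intro h hhm hh
  obtain ⟨hρ0, hρ1⟩ := hρ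
  have hgL2 : MemLp g 2 P := (hφL2.condExp one_le_two).ae_eq hg.symm
  have hvar_eq {k : Ω → ℝ} (hkm : Measurable[𝓖W] k) (hk : MemLp k 2 P) :=
    variance_augmentation_eq hindep hRmeas hRbin hRmean hρ0.ne' hφmeas hφL2
      (hkm.mono h𝓖W le_rfl) hk
  have hvar : variance (fun ω => h ω + (R ω / ρ) * (φ ω - h ω)) P
      = variance (fun ω => g ω + (R ω / ρ) * (φ ω - g ω)) P
        + (1 / ρ - 1) * ∫ ω, (h ω - g ω) ^ 2 ∂P := by
    rw [hvar_eq hhm hh, hvar_eq hgmeas hgL2,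
      integral_sq_sub_eq_add_of_ae_eq_condExp (h𝓖W.trans h𝓖) hφL2 hgmeas hg hhm hh]
    ring
  have hcoef : 0 < 1 / ρ - 1 := sub_pos.mpr (one_lt_one_div hρ0 hρ1)
  refine ⟨hvar, ?_, ?_⟩
  · rw [hvar]
    exact le_add_of_nonneg_right (mul_nonneg hcoef.le (integral_nonneg fun ω ↦ sq_nonneg _))
  · rw [hvar, add_eq_left, mul_eq_zero, or_iff_right hcoef.ne',
      integral_sq_sub_eq_zero_iff hh hgL2]
end

section
/- Let (Ω, 𝓕, P) be a probability space, A : Ω → {0,1}, Y : Ω → ℝ with |Y| ≤ M almost surely, 𝓖_X ⊆ 𝓖_W ⊆ 𝓕 nested sub-σ-algebras, and R : Ω → {0,1} with E[R] = ρ ∈ (0,1) and σ(R) independent of σ(Y, A) ⊔ 𝓖_W. Let π₁ = E[A | 𝓖_X] with π₁ ∈ [1/M, 1 − 1/M] a.s., π₀ = 1 − π₁, and μ₁, μ₀ the true outcome regressions with μₐπₐ = E[1{A=a}Y | 𝓖_X] a.s.; set Δ* := E[μ₁ − μ₀]. Let π̂₁, π̂₀, μ̂₁, μ̂₀ be 𝓖_X-measurable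 working functions with π̂₁, π̂₀ ∈ [1/M, 1] and |μ̂₁|, |μ̂₀| ≤ M a.s., and let Π̂₁, Π̂₀, m̂₁, m̂₀ be arbitrary 𝓖_W-measurable functions bounded by M in absolute value. Define V̂ := μ̂₁ + Π̂₁(m̂₁ − μ̂₁)/π̂₁ − μ̂₀ − Π̂₀(m̂₀ − μ̂₀)/π̂₀ + (R/ρ)[ {AY − Aμ̂₁ − Π̂₁m̂₁ + Π̂₁μ̂₁}/π̂₁ − {(1−A)Y − (1−A)μ̂₀ − Π̂₀m̂₀ + Π̂₀μ̂₀}/π̂₀ ]. Then E[V̂] − Δ* = E[(π₁ − π̂₁)(μ₁ − μ̂₁)/π̂₁] − E[(π₀ − π̂₀)(μ₀ − μ̂₀)/π̂₀]; in particular, the bias of V̂ does not depend on the imputation functions Π̂₁, Π̂₀, m̂₁, m̂₀. -/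
/-!
Write `V̂ = B + (R / ρ) G`, where `B` and `G` are functions of `(Y, A, W)`. As `R` is independent
of them, `E[(R / ρ) G] = E[G]`, and in `B + G` the imputation terms `Π̂ₐ (m̂ₐ - μ̂ₐ) / π̂ₐ` cancel,
leaving the two AIPW arms `μ̂ₐ + 1{A=a} (Y - μ̂ₐ) / π̂ₐ`. Conditioning on `𝓖_X` replaces
`1{A=a} (Y - μ̂ₐ)` by `πₐ (μₐ - μ̂ₐ)`, and
`μ̂ₐ + πₐ (μₐ - μ̂ₐ) / π̂ₐ - μₐ = (πₐ - π̂ₐ)(μₐ - μ̂ₐ) / π̂ₐ`.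
All functions involved are essentially bounded, which gives every integrability side condition.
-/

open MeasureTheory ProbabilityTheory
open scoped ENNReal

section Bounded

variable {Ω : Type*} [MeasurableSpace Ω] {P : Measure Ω}

lemma memLp_top_inv_of_le {f : Ω → ℝ} {c : ℝ} (hf : AEStronglyMeasurable f P) (hc : 0 < c)
    (hfc : ∀ᵐ ω ∂P, c ≤ f ω) : MemLp (fun ω => (f ω)⁻¹) ∞ P := by
  refine memLp_top_of_bound hf.aemeasurable.inv.aestronglyMeasurable c⁻¹ ?_
  filter_upwards [hfc] with ω hω
  rw [Real.norm_eq_abs, abs_of_pos (inv_pos.2 (hc.trans_le hω))]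
  exact inv_anti₀ hc hω

lemma MeasureTheory.MemLp.div_of_le {f g : Ω → ℝ} {c : ℝ} (hf : MemLp f ∞ P)
    (hg : AEStronglyMeasurable g P) (hc : 0 < c) (hgc : ∀ᵐ ω ∂P, c ≤ g ω) :
    MemLp (fun ω => f ω / g ω) ∞ P := by
  simpa only [div_eq_mul_inv] using (memLp_top_inv_of_le hg hc hgc).mul' hf

lemma MeasureTheory.MemLp.of_mul_of_le {f g : Ω → ℝ} {c : ℝ}
    (hfg : MemLp (fun ω => f ω * g ω) ∞ P) (hg : AEStronglyMeasurable g P) (hc : 0 < c)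
    (hgc : ∀ᵐ ω ∂P, c ≤ g ω) : MemLp f ∞ P := by
  refine (hfg.div_of_le hg hc hgc).ae_eq ?_
  filter_upwards [hgc] with ω hω
  field_simp [(hc.trans_le hω).ne']

end Bounded

section SubSigmaAlgebra

variable {Ω : Type*} {m mF : MeasurableSpace Ω} {P : Measure Ω}

lemma integral_mul_eq_integral_mul_of_ae_eq_condExp [IsFiniteMeasure P] (hm : m ≤ mF)
    {g f h : Ω → ℝ} (hg : StronglyMeasurable[m] g) (hgf : Integrable (fun ω => g ω * f ω) P)
    (hf : Integrable f P) (hh : h =ᵐ[P] P[f|m]) :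
    ∫ ω, g ω * f ω ∂P = ∫ ω, g ω * h ω ∂P := by
  calc ∫ ω, g ω * f ω ∂P = ∫ ω, (P[g * f|m]) ω ∂P := (integral_condExp hm).symm
    _ = ∫ ω, g ω * h ω ∂P := by
      refine integral_congr_ae ?_
      filter_upwards [condExp_mul_of_stronglyMeasurable_left hg hgf hf, hh] with ω h1 h2
      rw [h1, Pi.mul_apply, h2]

lemma one_sub_ae_eq_condExp_one_sub [IsFiniteMeasure P] (hm : m ≤ mF) {T p : Ω → ℝ}
    (hT : Integrable T P) (hp : p =ᵐ[P] P[T|m]) :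
    (fun ω => 1 - p ω) =ᵐ[P] P[fun ω => 1 - T ω|m] := by
  filter_upwards [condExp_sub (integrable_const (1 : ℝ)) hT m, hp] with ω hsub hω
  rw [show (fun ω => 1 - T ω) = (fun _ => (1 : ℝ)) - T from rfl, hsub, Pi.sub_apply,
    condExp_const hm, hω]

lemma mul_sub_ae_eq_condExp_mul_sub {T Y p μ μh : Ω → ℝ} (hT : Integrable T P)
    (hTY : Integrable (fun ω => T ω * Y ω) P) (hμh : StronglyMeasurable[m] μh)
    (hμhT : Integrable (μh * T) P)
    (hpT : p =ᵐ[P] P[T|m]) (hμpTY : (fun ω => μ ω * p ω) =ᵐ[P] P[fun ω => T ω * Y ω|m]) :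
    (fun ω => p ω * (μ ω - μh ω)) =ᵐ[P] P[fun ω => T ω * (Y ω - μh ω)|m] := by
  have hsplit : (fun ω => T ω * (Y ω - μh ω)) = (fun ω => T ω * Y ω) - μh * T := by
    ext ω; simp only [Pi.sub_apply, Pi.mul_apply]; ring
  rw [hsplit]
  filter_upwards [condExp_sub hTY hμhT m, condExp_mul_of_stronglyMeasurable_left hμh hμhT hT,
    hpT, hμpTY] with ω hsub hpull hp hμp
  rw [hsub, Pi.sub_apply, hpull, Pi.mul_apply, ← hp, ← hμp]
  ring

lemma integral_aipw_sub_integral [IsFiniteMeasure P] (hm : m ≤ mF) {T Y p μ πh μh : Ω → ℝ}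
    {c : ℝ} (hT : MemLp T ∞ P) (hY : MemLp Y ∞ P) (hμ : MemLp μ ∞ P)
    (hπh_meas : StronglyMeasurable[m] πh) (hc : 0 < c) (hπhc : ∀ᵐ ω ∂P, c ≤ πh ω)
    (hμh_meas : StronglyMeasurable[m] μh) (hμh : MemLp μh ∞ P)
    (hpT : p =ᵐ[P] P[T|m]) (hμpTY : (fun ω => μ ω * p ω) =ᵐ[P] P[fun ω => T ω * Y ω|m]) :
    ∫ ω, (μh ω + T ω * (Y ω - μh ω) / πh ω) ∂P - ∫ ω, μ ω ∂P
      = ∫ ω, (p ω - πh ω) * (μ ω - μh ω) / πh ω ∂P := by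
  have hπh' : AEStronglyMeasurable πh P := (hπh_meas.mono hm).aestronglyMeasurable
  have hp : MemLp p ∞ P := (hT.condExp le_top).ae_eq hpT.symm
  have hTYμh : MemLp (fun ω => T ω * (Y ω - μh ω)) ∞ P := (hY.sub hμh).mul' hT
  have hcond := mul_sub_ae_eq_condExp_mul_sub (hT.integrable le_top)
    ((hY.mul' hT).integrable le_top) hμh_meas ((hT.mul' hμh).integrable le_top) hpT hμpTY
  have hreweight : ∫ ω, T ω * (Y ω - μh ω) / πh ω ∂P = ∫ ω, p ω * (μ ω - μh ω) / πh ω ∂P := by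
    simp only [div_eq_inv_mul]
    exact integral_mul_eq_integral_mul_of_ae_eq_condExp hm
      hπh_meas.measurable.inv.stronglyMeasurable
      (by simpa only [div_eq_inv_mul] using (hTYμh.div_of_le hπh' hc hπhc).integrable le_top)
      (hTYμh.integrable le_top) hcond
  calc ∫ ω, (μh ω + T ω * (Y ω - μh ω) / πh ω) ∂P - ∫ ω, μ ω ∂P
      = ∫ ω, p ω * (μ ω - μh ω) / πh ω ∂P - ∫ ω, (μ ω - μh ω) ∂P := by
        rw [integral_add (hμh.integrable le_top)
          ((hTYμh.div_of_le hπh' hc hπhc).integrable le_top), hreweight,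
          integral_sub (hμ.integrable le_top) (hμh.integrable le_top)]
        ring
    _ = ∫ ω, (p ω - πh ω) * (μ ω - μh ω) / πh ω ∂P := by
      rw [← integral_sub (f := fun ω => p ω * (μ ω - μh ω) / πh ω) (g := fun ω => μ ω - μh ω)
        ((((hμ.sub hμh).mul' hp).div_of_le hπh' hc hπhc).integrable le_top)
        ((hμ.sub hμh).integrable le_top)]
      refine integral_congr_ae ?_
      filter_upwards [hπhc] with ω hω
      field_simp [(hc.trans_le hω).ne']

lemma integral_add_div_mul_of_indep {R B G : Ω → ℝ} {ρ : ℝ}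
    (hRG : Indep (MeasurableSpace.comap R inferInstance) m P) (hR : Measurable R)
    (hRmean : ∫ ω, R ω ∂P = ρ) (hρ : ρ ≠ 0) (hG : Measurable[m] G) (hm : m ≤ mF)
    (hB : Integrable B P) (hGi : Integrable G P) :
    ∫ ω, (B ω + R ω / ρ * G ω) ∂P = ∫ ω, (B ω + G ω) ∂P := by
  have hind : IndepFun R G P := indep_of_indep_of_le_right hRG hG.comap_le
  -- `∫ R ∂P` is junk `0` unless `R` is integrable.
  have hRi : Integrable R P := by
    by_contra h
    exact hρ (hRmean ▸ integral_undef h)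
  have hRGi : Integrable (fun ω => R ω * G ω) P := hind.integrable_mul hRi hGi
  calc ∫ ω, (B ω + R ω / ρ * G ω) ∂P = ∫ ω, B ω ∂P + ρ⁻¹ * ∫ ω, R ω * G ω ∂P := by
        rw [← integral_const_mul, ← integral_add hB (hRGi.const_mul _)]
        congr 1; ext ω; ring
    _ = ∫ ω, (B ω + G ω) ∂P := by
      rw [hind.integral_fun_mul_eq_mul_integral hR.aestronglyMeasurable
        (hG.mono hm le_rfl).aestronglyMeasurable, hRmean, inv_mul_cancel_left₀ hρ,
        integral_add hB hGi]

lemma integral_smmal_eq_sub_integral_aipw [IsFiniteMeasure P]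
    (hm : m ≤ mF) {A Y R πh1 πh0 μh1 μh0 Pih1 Pih0 mh1 mh0 : Ω → ℝ} {ρ c : ℝ}
    (hA : Measurable A) (hY : Measurable Y) (hR : Measurable R)
    (hRmean : ∫ ω, R ω ∂P = ρ) (hρ : ρ ≠ 0)
    (hindep : Indep (MeasurableSpace.comap R inferInstance)
      (MeasurableSpace.comap Y inferInstance ⊔ MeasurableSpace.comap A inferInstance ⊔ m) P)
    (hπh1 : Measurable[m] πh1) (hπh0 : Measurable[m] πh0)
    (hμh1 : Measurable[m] μh1) (hμh0 : Measurable[m] μh0)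
    (hPih1 : Measurable[m] Pih1) (hPih0 : Measurable[m] Pih0)
    (hmh1 : Measurable[m] mh1) (hmh0 : Measurable[m] mh0)
    (bA : MemLp A ∞ P) (bY : MemLp Y ∞ P) (bμh1 : MemLp μh1 ∞ P) (bμh0 : MemLp μh0 ∞ P)
    (bPih1 : MemLp Pih1 ∞ P) (bPih0 : MemLp Pih0 ∞ P) (bmh1 : MemLp mh1 ∞ P)
    (bmh0 : MemLp mh0 ∞ P) (hc : 0 < c) (hπh1c : ∀ᵐ ω ∂P, c ≤ πh1 ω)
    (hπh0c : ∀ᵐ ω ∂P, c ≤ πh0 ω) :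
    ∫ ω, (μh1 ω + Pih1 ω * (mh1 ω - μh1 ω) / πh1 ω
        - μh0 ω - Pih0 ω * (mh0 ω - μh0 ω) / πh0 ω
        + (R ω / ρ) *
          ((A ω * Y ω - A ω * μh1 ω - Pih1 ω * mh1 ω + Pih1 ω * μh1 ω) / πh1 ω
          - ((1 - A ω) * Y ω - (1 - A ω) * μh0 ω - Pih0 ω * mh0 ω + Pih0 ω * μh0 ω)
              / πh0 ω)) ∂P
      = ∫ ω, (μh1 ω + A ω * (Y ω - μh1 ω) / πh1 ω) ∂P
        - ∫ ω, (μh0 ω + (1 - A ω) * (Y ω - μh0 ω) / πh0 ω) ∂P := by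
  have hπh1' : AEStronglyMeasurable πh1 P := (hπh1.mono hm le_rfl).aestronglyMeasurable
  have hπh0' : AEStronglyMeasurable πh0 P := (hπh0.mono hm le_rfl).aestronglyMeasurable
  have b1A : MemLp (fun ω => 1 - A ω) ∞ P := (memLp_const 1).sub bA
  have hB : Integrable (fun ω => μh1 ω + Pih1 ω * (mh1 ω - μh1 ω) / πh1 ω
      - μh0 ω - Pih0 ω * (mh0 ω - μh0 ω) / πh0 ω) P :=
    ((((bμh1.add (((bmh1.sub bμh1).mul' bPih1).div_of_le hπh1' hc hπh1c)).sub bμh0).sub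
      (((bmh0.sub bμh0).mul' bPih0).div_of_le hπh0' hc hπh0c))).integrable le_top
  have hG : Integrable (fun ω =>
      (A ω * Y ω - A ω * μh1 ω - Pih1 ω * mh1 ω + Pih1 ω * μh1 ω) / πh1 ω
      - ((1 - A ω) * Y ω - (1 - A ω) * μh0 ω - Pih0 ω * mh0 ω + Pih0 ω * μh0 ω) / πh0 ω) P :=
    (((((((bY.mul' bA).sub (bμh1.mul' bA)).sub (bmh1.mul' bPih1)).add
      (bμh1.mul' bPih1)).div_of_le hπh1' hc hπh1c).sub
      (((((bY.mul' b1A).sub (bμh0.mul' b1A)).sub (bmh0.mul' bPih0)).add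
      (bμh0.mul' bPih0)).div_of_le hπh0' hc hπh0c))).integrable le_top
  have hGm : Measurable[MeasurableSpace.comap Y inferInstance
      ⊔ MeasurableSpace.comap A inferInstance ⊔ m] (fun ω =>
      (A ω * Y ω - A ω * μh1 ω - Pih1 ω * mh1 ω + Pih1 ω * μh1 ω) / πh1 ω
      - ((1 - A ω) * Y ω - (1 - A ω) * μh0 ω - Pih0 ω * mh0 ω + Pih0 ω * μh0 ω) / πh0 ω) := by
    set m' := MeasurableSpace.comap Y inferInstance ⊔ MeasurableSpace.comap A inferInstance ⊔ m
    have hm' : m ≤ m' := le_sup_right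
    have := measurable_iff_comap_le.mpr (le_sup_left.trans le_sup_left : _ ≤ m')
    have := measurable_iff_comap_le.mpr (le_sup_right.trans le_sup_left : _ ≤ m')
    have := hπh1.mono hm' le_rfl
    have := hπh0.mono hm' le_rfl
    have := hμh1.mono hm' le_rfl
    have := hμh0.mono hm' le_rfl
    have := hPih1.mono hm' le_rfl
    have := hPih0.mono hm' le_rfl
    have := hmh1.mono hm' le_rfl
    have := hmh0.mono hm' le_rfl
    fun_prop
  rw [integral_add_div_mul_of_indep hindep hR hRmean hρ hGm
      (sup_le (sup_le hY.comap_le hA.comap_le) hm) hB hG,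
    ← integral_sub (f := fun ω => μh1 ω + A ω * (Y ω - μh1 ω) / πh1 ω)
      (g := fun ω => μh0 ω + (1 - A ω) * (Y ω - μh0 ω) / πh0 ω)
      ((bμh1.add (((bY.sub bμh1).mul' bA).div_of_le hπh1' hc hπh1c)).integrable le_top)
      ((bμh0.add (((bY.sub bμh0).mul' b1A).div_of_le hπh0' hc hπh0c)).integrable le_top)]
  congr 1
  ext ω
  ring

end SubSigmaAlgebra

theorem smmal_bias_identity_general
    {Ω : Type*} (𝓖X 𝓖W : MeasurableSpace Ω) [mF : MeasurableSpace Ω]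
    (P : Measure Ω) [IsProbabilityMeasure P]
    (h𝓖X : 𝓖X ≤ 𝓖W) (h𝓖W : 𝓖W ≤ mF)
    (M : ℝ) (hM : 1 < M)
    (A Y R : Ω → ℝ)
    (hA : Measurable A) (hAbin : ∀ ω, A ω = 0 ∨ A ω = 1)
    (hYmeas : Measurable Y) (hYbdd : ∀ᵐ ω ∂P, |Y ω| ≤ M)
    (ρ : ℝ) (hρ : ρ ∈ Set.Ioo (0 : ℝ) 1)
    (hRmeas : Measurable R)
    (hRmean : ∫ ω, R ω ∂P = ρ)
    (hindep : Indep (MeasurableSpace.comap R inferInstance)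
      (MeasurableSpace.comap Y inferInstance ⊔ MeasurableSpace.comap A inferInstance ⊔ 𝓖W) P)
    (π1 μ1 μ0 : Ω → ℝ)
    (hπ1meas : Measurable[𝓖X] π1) (hπ1 : π1 =ᵐ[P] P[A|𝓖X])
    (hoverlap : ∀ᵐ ω ∂P, π1 ω ∈ Set.Icc (1 / M) (1 - 1 / M))
    (hμ1 : (fun ω => μ1 ω * π1 ω) =ᵐ[P] P[fun ω => A ω * Y ω|𝓖X])
    (hμ0 : (fun ω => μ0 ω * (1 - π1 ω)) =ᵐ[P] P[fun ω => (1 - A ω) * Y ω|𝓖X])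
    (πh1 πh0 μh1 μh0 : Ω → ℝ)
    (hπh1meas : Measurable[𝓖X] πh1) (hπh0meas : Measurable[𝓖X] πh0)
    (hπh1b : ∀ᵐ ω ∂P, πh1 ω ∈ Set.Icc (1 / M) 1)
    (hπh0b : ∀ᵐ ω ∂P, πh0 ω ∈ Set.Icc (1 / M) 1)
    (hμh1meas : Measurable[𝓖X] μh1) (hμh0meas : Measurable[𝓖X] μh0)
    (hμh1b : ∀ᵐ ω ∂P, |μh1 ω| ≤ M) (hμh0b : ∀ᵐ ω ∂P, |μh0 ω| ≤ M)
    (Pih1 Pih0 mh1 mh0 : Ω → ℝ)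
    (hPih1meas : Measurable[𝓖W] Pih1) (hPih0meas : Measurable[𝓖W] Pih0)
    (hmh1meas : Measurable[𝓖W] mh1) (hmh0meas : Measurable[𝓖W] mh0)
    (hPih1b : ∀ᵐ ω ∂P, |Pih1 ω| ≤ M) (hPih0b : ∀ᵐ ω ∂P, |Pih0 ω| ≤ M)
    (hmh1b : ∀ᵐ ω ∂P, |mh1 ω| ≤ M) (hmh0b : ∀ᵐ ω ∂P, |mh0 ω| ≤ M) :
    (∫ ω, (μh1 ω + Pih1 ω * (mh1 ω - μh1 ω) / πh1 ω
        - μh0 ω - Pih0 ω * (mh0 ω - μh0 ω) / πh0 ω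
        + (R ω / ρ) *
          ((A ω * Y ω - A ω * μh1 ω - Pih1 ω * mh1 ω + Pih1 ω * μh1 ω) / πh1 ω
          - ((1 - A ω) * Y ω - (1 - A ω) * μh0 ω - Pih0 ω * mh0 ω + Pih0 ω * μh0 ω)
              / πh0 ω)) ∂P)
      - (∫ ω, (μ1 ω - μ0 ω) ∂P)
    = (∫ ω, (π1 ω - πh1 ω) * (μ1 ω - μh1 ω) / πh1 ω ∂P)
      - ∫ ω, ((1 - π1 ω) - πh0 ω) * (μ0 ω - μh0 ω) / πh0 ω ∂P := by
  have hc : 0 < 1 / M := one_div_pos.2 (zero_lt_one.trans hM)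
  have hXF : 𝓖X ≤ mF := h𝓖X.trans h𝓖W
  have bA : MemLp A ∞ P := memLp_top_of_bound hA.aestronglyMeasurable 1
    (ae_of_all _ fun ω => by rcases hAbin ω with h | h <;> simp [h])
  have bY : MemLp Y ∞ P := memLp_top_of_bound hYmeas.aestronglyMeasurable M hYbdd
  have b1A : MemLp (fun ω => 1 - A ω) ∞ P := (memLp_const 1).sub bA
  have hπh1c : ∀ᵐ ω ∂P, 1 / M ≤ πh1 ω := hπh1b.mono fun ω h => h.1
  have hπh0c : ∀ᵐ ω ∂P, 1 / M ≤ πh0 ω := hπh0b.mono fun ω h => h.1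
  have bμh1 := memLp_top_of_bound (hμh1meas.mono hXF le_rfl).aestronglyMeasurable M hμh1b
  have bμh0 := memLp_top_of_bound (hμh0meas.mono hXF le_rfl).aestronglyMeasurable M hμh0b
  have bμ1 : MemLp μ1 ∞ P :=
    (((bY.mul' bA).condExp le_top).ae_eq hμ1.symm).of_mul_of_le
      (hπ1meas.mono hXF le_rfl).aestronglyMeasurable hc (hoverlap.mono fun ω h => h.1)
  have bμ0 : MemLp μ0 ∞ P :=
    (((bY.mul' b1A).condExp le_top).ae_eq hμ0.symm).of_mul_of_le
      (measurable_const.sub (hπ1meas.mono hXF le_rfl)).aestronglyMeasurable hc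
      (hoverlap.mono fun ω h => by linarith [h.2])
  have hsmmal := integral_smmal_eq_sub_integral_aipw h𝓖W hA hYmeas hRmeas hRmean hρ.1.ne' hindep
    (hπh1meas.mono h𝓖X le_rfl) (hπh0meas.mono h𝓖X le_rfl) (hμh1meas.mono h𝓖X le_rfl)
    (hμh0meas.mono h𝓖X le_rfl) hPih1meas hPih0meas hmh1meas hmh0meas bA bY bμh1 bμh0
    (memLp_top_of_bound (hPih1meas.mono h𝓖W le_rfl).aestronglyMeasurable M hPih1b)
    (memLp_top_of_bound (hPih0meas.mono h𝓖W le_rfl).aestronglyMeasurable M hPih0b)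
    (memLp_top_of_bound (hmh1meas.mono h𝓖W le_rfl).aestronglyMeasurable M hmh1b)
    (memLp_top_of_bound (hmh0meas.mono h𝓖W le_rfl).aestronglyMeasurable M hmh0b)
    hc hπh1c hπh0c
  have harm1 := integral_aipw_sub_integral hXF bA bY bμ1 hπh1meas.stronglyMeasurable hc hπh1c
    hμh1meas.stronglyMeasurable bμh1 hπ1 hμ1
  have harm0 := integral_aipw_sub_integral hXF b1A bY bμ0 hπh0meas.stronglyMeasurable hc hπh0c
    hμh0meas.stronglyMeasurable bμh0 (one_sub_ae_eq_condExp_one_sub hXF (bA.integrable le_top) hπ1)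
    hμ0
  rw [hsmmal, integral_sub (bμ1.integrable le_top) (bμ0.integrable le_top), ← harm1, ← harm0]
  ring

/-- **Bias identity for the SMMAL functional.**
With nested σ-algebras `𝓖X ⊆ 𝓖W ⊆ 𝓕`, binary treatment `A`, bounded outcome `Y`, MCAR
labeling indicator `R` (`E[R] = ρ ∈ (0,1)`, `σ(R)` independent of `σ(Y) ⊔ σ(A) ⊔ 𝓖W`),
true nuisances `π₁ = E[A ∣ 𝓖X] ∈ [1/M,1−1/M]`, `π₀ = 1−π₁`, `μₐπₐ = E[1{A=a}Y ∣ 𝓖X]`,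
and `Δ* = E[μ₁−μ₀]`, the SMMAL functional `V̂` built from `𝓖X`-measurable working models
`π̂ₐ ∈ [1/M,1]`, `|μ̂ₐ| ≤ M` and arbitrary `𝓖W`-measurable imputations `Π̂ₐ, m̂ₐ` bounded
by `M` satisfies `E[V̂] − Δ* = E[(π₁−π̂₁)(μ₁−μ̂₁)/π̂₁] − E[(π₀−π̂₀)(μ₀−μ̂₀)/π̂₀]`;
in particular the bias does not depend on the imputation models. -/
theorem smmal_bias_identity
    {Ω : Type*} (𝓖X 𝓖W : MeasurableSpace Ω) [mF : MeasurableSpace Ω]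
    (P : Measure Ω) [IsProbabilityMeasure P]
    (h𝓖X : 𝓖X ≤ 𝓖W) (h𝓖W : 𝓖W ≤ mF)
    (M : ℝ) (hM : 1 < M)
    (A Y R : Ω → ℝ)
    (hA : Measurable A) (hAbin : ∀ ω, A ω = 0 ∨ A ω = 1)
    (hYmeas : Measurable Y) (hYbdd : ∀ᵐ ω ∂P, |Y ω| ≤ M)
    (ρ : ℝ) (hρ : ρ ∈ Set.Ioo (0 : ℝ) 1)
    (hRmeas : Measurable R) (hRbin : ∀ ω, R ω = 0 ∨ R ω = 1)
    (hRmean : ∫ ω, R ω ∂P = ρ)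
    (hindep : Indep (MeasurableSpace.comap R inferInstance)
      (MeasurableSpace.comap Y inferInstance ⊔ MeasurableSpace.comap A inferInstance ⊔ 𝓖W) P)
    (π1 μ1 μ0 : Ω → ℝ)
    (hπ1meas : Measurable[𝓖X] π1) (hπ1 : π1 =ᵐ[P] P[A|𝓖X])
    (hoverlap : ∀ᵐ ω ∂P, π1 ω ∈ Set.Icc (1 / M) (1 - 1 / M))
    (hμ1meas : Measurable[𝓖X] μ1) (hμ0meas : Measurable[𝓖X] μ0)
    (hμ1 : (fun ω => μ1 ω * π1 ω) =ᵐ[P] P[fun ω => A ω * Y ω|𝓖X])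
    (hμ0 : (fun ω => μ0 ω * (1 - π1 ω)) =ᵐ[P] P[fun ω => (1 - A ω) * Y ω|𝓖X])
    (πh1 πh0 μh1 μh0 : Ω → ℝ)
    (hπh1meas : Measurable[𝓖X] πh1) (hπh0meas : Measurable[𝓖X] πh0)
    (hπh1b : ∀ᵐ ω ∂P, πh1 ω ∈ Set.Icc (1 / M) 1)
    (hπh0b : ∀ᵐ ω ∂P, πh0 ω ∈ Set.Icc (1 / M) 1)
    (hμh1meas : Measurable[𝓖X] μh1) (hμh0meas : Measurable[𝓖X] μh0)
    (hμh1b : ∀ᵐ ω ∂P, |μh1 ω| ≤ M) (hμh0b : ∀ᵐ ω ∂P, |μh0 ω| ≤ M)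
    (Pih1 Pih0 mh1 mh0 : Ω → ℝ)
    (hPih1meas : Measurable[𝓖W] Pih1) (hPih0meas : Measurable[𝓖W] Pih0)
    (hmh1meas : Measurable[𝓖W] mh1) (hmh0meas : Measurable[𝓖W] mh0)
    (hPih1b : ∀ᵐ ω ∂P, |Pih1 ω| ≤ M) (hPih0b : ∀ᵐ ω ∂P, |Pih0 ω| ≤ M)
    (hmh1b : ∀ᵐ ω ∂P, |mh1 ω| ≤ M) (hmh0b : ∀ᵐ ω ∂P, |mh0 ω| ≤ M) :
    (∫ ω, (μh1 ω + Pih1 ω * (mh1 ω - μh1 ω) / πh1 ω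
        - μh0 ω - Pih0 ω * (mh0 ω - μh0 ω) / πh0 ω
        + (R ω / ρ) *
          ((A ω * Y ω - A ω * μh1 ω - Pih1 ω * mh1 ω + Pih1 ω * μh1 ω) / πh1 ω
          - ((1 - A ω) * Y ω - (1 - A ω) * μh0 ω - Pih0 ω * mh0 ω + Pih0 ω * μh0 ω)
              / πh0 ω)) ∂P)
      - (∫ ω, (μ1 ω - μ0 ω) ∂P)
    = (∫ ω, (π1 ω - πh1 ω) * (μ1 ω - μh1 ω) / πh1 ω ∂P)
      - ∫ ω, ((1 - π1 ω) - πh0 ω) * (μ0 ω - μh0 ω) / πh0 ω ∂P :=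
  smmal_bias_identity_general 𝓖X 𝓖W (mF := mF) P h𝓖X h𝓖W M hM A Y R hA hAbin hYmeas hYbdd ρ hρ
    hRmeas hRmean hindep π1 μ1 μ0 hπ1meas hπ1 hoverlap hμ1 hμ0 πh1 πh0 μh1 μh0 hπh1meas hπh0meas
    hπh1b hπh0b hμh1meas hμh0meas hμh1b hμh0b Pih1 Pih0 mh1 mh0 hPih1meas hPih0meas hmh1meas
    hmh0meas hPih1b hPih0b hmh1b hmh0b
end

section
/- Let (Ω, 𝓕, P) be a probability space, X : Ω → ℝ^{p+1} with ‖X‖_∞ ≤ M almost surely, A : Ω → {0,1}, and let g(u) = 1/(1 + e^{−u}) be the logistic function. Fix a ∈ {0,1} and suppose the propensity score model is correct: E[A | σ(X)] = g(α*ᵀX) almost surely for some α* ∈ ℝ^{p+1}. Let w : ℝ^{p+1} → [0, M] be any measurable weight function. Then α* is a global minimizer of the calibrated loss L(α) := E[ w(X) · { (a − A)·αᵀX + 1{A = a}·exp((−1)^a · αᵀX) } ] over α ∈ ℝ^{p+1}; that is, L(α) ≥ L(α*) for all α ∈ ℝ^{p+1}. -/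
open MeasureTheory ProbabilityTheory Real

/-! The calibrated loss `ℓ(s) = (a - A) s + 1{A = a} exp ((1 - 2a) s)` is convex in the linear
score `s`, so it lies above its tangent at `t = α*ᵀX`. For binary `a` and `A` the slope of that
tangent is `(1 + exp ((1 - 2a) t)) (g(t) - A)`, a multiple of the propensity residual. Multiplied by
the `σ(X)`-measurable factor `w(X) (αᵀX - t)`, the residual has mean zero when `E[A ∣ X] = g(t)`,
hence `L(α) - L(α*) ≥ 0`. -/

noncomputable def calibratedLoss (a y s : ℝ) : ℝ :=
  (a - y) * s + (if y = a then 1 else 0) * exp ((1 - 2 * a) * s)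

noncomputable def calibratedScore (a y t : ℝ) : ℝ :=
  (a - y) + (if y = a then 1 else 0) * ((1 - 2 * a) * exp ((1 - 2 * a) * t))

theorem calibratedLoss_add_mul_score_le (a y s t : ℝ) :
    calibratedLoss a y t + (s - t) * calibratedScore a y t ≤ calibratedLoss a y s := by
  have htangent : exp ((1 - 2 * a) * t) * (1 + (1 - 2 * a) * (s - t)) ≤ exp ((1 - 2 * a) * s) := by
    calc exp ((1 - 2 * a) * t) * (1 + (1 - 2 * a) * (s - t))
        ≤ exp ((1 - 2 * a) * t) * exp ((1 - 2 * a) * (s - t)) := by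
          gcongr; linarith [add_one_le_exp ((1 - 2 * a) * (s - t))]
      _ = exp ((1 - 2 * a) * s) := by rw [← exp_add]; ring_nf
  unfold calibratedLoss calibratedScore
  split_ifs <;> linarith

theorem calibratedScore_eq_mul_sigmoid_sub {a y : ℝ} (ha : a = 0 ∨ a = 1) (hy : y = 0 ∨ y = 1)
    (t : ℝ) : calibratedScore a y t = (1 + exp ((1 - 2 * a) * t)) * (sigmoid t - y) := by
  have hexp : exp (-t) * exp t = 1 := by rw [← exp_add]; simp
  rcases ha with rfl | rfl <;> rcases hy with rfl | rfl <;>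
    norm_num [calibratedScore, sigmoid_def] <;> field_simp <;> linarith

theorem calibratedLoss_add_mul_sigmoid_sub_le {a y : ℝ} (ha : a = 0 ∨ a = 1)
    (hy : y = 0 ∨ y = 1) (s t : ℝ) :
    calibratedLoss a y t + (s - t) * (1 + exp ((1 - 2 * a) * t)) * (sigmoid t - y)
      ≤ calibratedLoss a y s := by
  simpa only [calibratedScore_eq_mul_sigmoid_sub ha hy, mul_assoc]
    using calibratedLoss_add_mul_score_le a y s t

theorem ite_eq_one_sub_add_mul {a y : ℝ} (ha : a = 0 ∨ a = 1) (hy : y = 0 ∨ y = 1) :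
    (if y = a then (1 : ℝ) else 0) = (1 - a) + (2 * a - 1) * y := by
  rcases ha with rfl | rfl <;> rcases hy with rfl | rfl <;> norm_num

theorem integrable_comp_of_ae_mem_compact {Ω E : Type*} [MeasurableSpace Ω] {μ : Measure Ω}
    [IsFiniteMeasure μ] [TopologicalSpace E] [MeasurableSpace E] [OpensMeasurableSpace E]
    {Y : Ω → E} (hY : AEMeasurable Y μ) {K : Set E} (hK : IsCompact K)
    (hYK : ∀ᵐ ω ∂μ, Y ω ∈ K) {f : E → ℝ} (hf : Continuous f) :
    Integrable (fun ω => f (Y ω)) μ := by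
  obtain ⟨C, hC⟩ := hK.exists_bound_of_continuousOn hf.continuousOn
  exact .of_bound (hf.measurable.comp_aemeasurable hY).aestronglyMeasurable C
    (hYK.mono fun ω hω => hC _ hω)

theorem integral_mul_sub_eq_zero_of_condExp_ae_eq {Ω : Type*} {m m₀ : MeasurableSpace Ω}
    {μ : Measure Ω} (hm : m ≤ m₀) [SigmaFinite (μ.trim hm)] {Z f g : Ω → ℝ}
    (hZ : StronglyMeasurable[m] Z) (hZf : Integrable (Z * f) μ) (hf : Integrable f μ)
    (hfg : μ[f|m] =ᵐ[μ] g) : ∫ ω, Z ω * (g ω - f ω) ∂μ = 0 := by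
  have hpull : μ[Z * f|m] =ᵐ[μ] fun ω => Z ω * g ω :=
    (condExp_mul_of_stronglyMeasurable_left hZ hZf hf).trans (hfg.mono fun ω hω => by simp [hω])
  calc ∫ ω, Z ω * (g ω - f ω) ∂μ = ∫ ω, Z ω * g ω ∂μ - ∫ ω, Z ω * f ω ∂μ := by
        simp only [mul_sub]; exact integral_sub (integrable_condExp.congr hpull) hZf
    _ = 0 := sub_eq_zero.mpr ((integral_congr_ae hpull).symm.trans (integral_condExp hm))

theorem integrable_mul_comp_of_mem_box {Ω ι : Type*} [MeasurableSpace Ω] {P : Measure Ω}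
    [IsFiniteMeasure P] [Fintype ι] {X : Ω → ι → ℝ} (hX : Measurable X) {M : ℝ}
    (hXbdd : ∀ᵐ ω ∂P, ∀ i, |X ω i| ≤ M) {A : Ω → ℝ} (hA : Measurable A)
    (hA01 : ∀ᵐ ω ∂P, A ω ∈ Set.Icc 0 1) {w : (ι → ℝ) → ℝ} (hw : Measurable w)
    (hwb : ∀ x, w x ∈ Set.Icc 0 M) {f : (ι → ℝ) × ℝ → ℝ} (hf : Continuous f) :
    Integrable (fun ω => w (X ω) * f (X ω, A ω)) P := by
  have hXA : ∀ᵐ ω ∂P, (X ω, A ω) ∈ (Set.univ.pi fun _ => Set.Icc (-M) M) ×ˢ Set.Icc 0 1 := by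
    filter_upwards [hXbdd, hA01] with ω hXω hAω
    exact ⟨fun i _ => abs_le.mp (hXω i), hAω⟩
  refine (integrable_comp_of_ae_mem_compact (hX.prodMk hA).aemeasurable
    ((isCompact_univ_pi fun _ => isCompact_Icc).prod isCompact_Icc) hXA hf).bdd_mul
    (hw.comp hX).aestronglyMeasurable (c := M) (ae_of_all _ fun ω => ?_)
  obtain ⟨hw0, hwM⟩ := hwb (X ω)
  exact abs_le.mpr ⟨by linarith, hwM⟩

theorem integrable_mul_calibratedLoss {Ω ι : Type*} [MeasurableSpace Ω] {P : Measure Ω}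
    [IsFiniteMeasure P] [Fintype ι] {X : Ω → ι → ℝ} (hX : Measurable X) {M : ℝ}
    (hXbdd : ∀ᵐ ω ∂P, ∀ i, |X ω i| ≤ M) {A : Ω → ℝ} (hA : Measurable A)
    (hAbin : ∀ ω, A ω = 0 ∨ A ω = 1) {w : (ι → ℝ) → ℝ} (hw : Measurable w)
    (hwb : ∀ x, w x ∈ Set.Icc 0 M) {a : ℝ} (ha : a = 0 ∨ a = 1) (β : ι → ℝ) :
    Integrable (fun ω => w (X ω) * calibratedLoss a (A ω) (β ⬝ᵥ X ω)) P := by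
  have hA01 : ∀ᵐ ω ∂P, A ω ∈ Set.Icc 0 1 :=
    ae_of_all _ fun ω => by rcases hAbin ω with h | h <;> simp [h]
  refine (integrable_mul_comp_of_mem_box hX hXbdd hA hA01 hw hwb
    (f := fun z => (a - z.2) * (β ⬝ᵥ z.1)
      + ((1 - a) + (2 * a - 1) * z.2) * exp ((1 - 2 * a) * (β ⬝ᵥ z.1))) (by fun_prop)).congr
    (ae_of_all _ fun ω => ?_)
  simp only [calibratedLoss, ite_eq_one_sub_add_mul ha (hAbin ω)]

theorem calibrated_ps_loss_minimizer_general
    {Ω : Type*} [mF : MeasurableSpace Ω]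
    (P : Measure Ω) [IsProbabilityMeasure P]
    (p : ℕ) (X : Ω → (Fin (p + 1) → ℝ)) (hX : Measurable X)
    (M : ℝ)
    (hXbdd : ∀ᵐ ω ∂P, ∀ i, |X ω i| ≤ M)
    (A : Ω → ℝ) (hA : Measurable A) (hAbin : ∀ ω, A ω = 0 ∨ A ω = 1)
    (a : ℝ) (ha : a = 0 ∨ a = 1)
    (αs : Fin (p + 1) → ℝ)
    (hPS : P[A|MeasurableSpace.comap X inferInstance] =ᵐ[P]
      fun ω => 1 / (1 + Real.exp (-(∑ i, αs i * X ω i))))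
    (w : (Fin (p + 1) → ℝ) → ℝ) (hw : Measurable w)
    (hwb : ∀ x, w x ∈ Set.Icc (0 : ℝ) M) :
    ∀ α : Fin (p + 1) → ℝ,
      (∫ ω, w (X ω) * ((a - A ω) * (∑ i, αs i * X ω i)
          + (if A ω = a then (1 : ℝ) else 0) * Real.exp ((1 - 2 * a) * ∑ i, αs i * X ω i)) ∂P)
      ≤ ∫ ω, w (X ω) * ((a - A ω) * (∑ i, α i * X ω i)
          + (if A ω = a then (1 : ℝ) else 0) * Real.exp ((1 - 2 * a) * ∑ i, α i * X ω i)) ∂P := by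
  intro α
  change ∫ ω, w (X ω) * calibratedLoss a (A ω) (αs ⬝ᵥ X ω) ∂P
    ≤ ∫ ω, w (X ω) * calibratedLoss a (A ω) (α ⬝ᵥ X ω) ∂P
  have hA01 (ω : Ω) : A ω ∈ Set.Icc 0 1 := by rcases hAbin ω with h | h <;> simp [h]
  have hint {f : (Fin (p + 1) → ℝ) × ℝ → ℝ} (hf : Continuous f) :=
    integrable_mul_comp_of_mem_box hX hXbdd hA (ae_of_all _ hA01) hw hwb hf
  have hloss := integrable_mul_calibratedLoss hX hXbdd hA hAbin hw hwb ha
  set κ : (Fin (p + 1) → ℝ) → ℝ :=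
    fun x => (α ⬝ᵥ x - αs ⬝ᵥ x) * (1 + exp ((1 - 2 * a) * (αs ⬝ᵥ x)))
  have hκ : Continuous κ := by fun_prop
  have hresid : Integrable (fun ω => w (X ω) * (κ (X ω) * (sigmoid (αs ⬝ᵥ X ω) - A ω))) P :=
    hint (f := fun z => κ z.1 * (sigmoid (αs ⬝ᵥ z.1) - z.2)) (by fun_prop)
  have hmean : ∫ ω, w (X ω) * (κ (X ω) * (sigmoid (αs ⬝ᵥ X ω) - A ω)) ∂P = 0 := by
    simp only [← mul_assoc]
    simp only [one_div] at hPS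
    exact integral_mul_sub_eq_zero_of_condExp_ae_eq hX.comap_le
      ((hw.mul hκ.measurable).comp (comap_measurable X)).stronglyMeasurable
      ((hint (f := fun z => κ z.1 * z.2) (by fun_prop)).congr
        (ae_of_all _ fun ω => (mul_assoc _ _ _).symm))
      (.of_mem_Icc 0 1 hA.aemeasurable (ae_of_all _ hA01)) hPS
  have htangent (ω : Ω) : w (X ω) * calibratedLoss a (A ω) (αs ⬝ᵥ X ω)
      + w (X ω) * (κ (X ω) * (sigmoid (αs ⬝ᵥ X ω) - A ω))
      ≤ w (X ω) * calibratedLoss a (A ω) (α ⬝ᵥ X ω) := by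
    rw [← mul_add]
    exact mul_le_mul_of_nonneg_left
      (calibratedLoss_add_mul_sigmoid_sub_le ha (hAbin ω) _ _) (hwb (X ω)).1
  calc _ = ∫ ω, w (X ω) * calibratedLoss a (A ω) (αs ⬝ᵥ X ω) ∂P
        + ∫ ω, w (X ω) * (κ (X ω) * (sigmoid (αs ⬝ᵥ X ω) - A ω)) ∂P := by rw [hmean, add_zero]
    _ = _ := (integral_add (hloss αs) hresid).symm
    _ ≤ _ := integral_mono ((hloss αs).add hresid) (hloss α) htangent

/-- **Model robustness of the calibrated propensity-score loss.**
If the logistic propensity model is correct, `E[A ∣ σ(X)] = g(α*ᵀX)` a.s. with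
`g(u) = 1/(1+e^{−u})`, then for any measurable weight `w : ℝ^{p+1} → [0,M]` and fixed
`a ∈ {0,1}`, the calibrated loss
`L(α) = E[w(X)·{(a−A)·αᵀX + 1{A=a}·exp((−1)^a·αᵀX)}]` is globally minimized at `α = α*`.
(For `a ∈ {0,1}` one has `(−1)^a = 1 − 2a`.) -/
theorem calibrated_ps_loss_minimizer
    {Ω : Type*} [mF : MeasurableSpace Ω]
    (P : Measure Ω) [IsProbabilityMeasure P]
    (p : ℕ) (X : Ω → (Fin (p + 1) → ℝ)) (hX : Measurable X)
    (M : ℝ) (hM : 0 < M)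
    (hXbdd : ∀ᵐ ω ∂P, ∀ i, |X ω i| ≤ M)
    (A : Ω → ℝ) (hA : Measurable A) (hAbin : ∀ ω, A ω = 0 ∨ A ω = 1)
    (a : ℝ) (ha : a = 0 ∨ a = 1)
    (αs : Fin (p + 1) → ℝ)
    (hPS : P[A|MeasurableSpace.comap X inferInstance] =ᵐ[P]
      fun ω => 1 / (1 + Real.exp (-(∑ i, αs i * X ω i))))
    (w : (Fin (p + 1) → ℝ) → ℝ) (hw : Measurable w)
    (hwb : ∀ x, w x ∈ Set.Icc (0 : ℝ) M) :
    ∀ α : Fin (p + 1) → ℝ,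
      (∫ ω, w (X ω) * ((a - A ω) * (∑ i, αs i * X ω i)
          + (if A ω = a then (1 : ℝ) else 0) * Real.exp ((1 - 2 * a) * ∑ i, αs i * X ω i)) ∂P)
      ≤ ∫ ω, w (X ω) * ((a - A ω) * (∑ i, α i * X ω i)
          + (if A ω = a then (1 : ℝ) else 0) * Real.exp ((1 - 2 * a) * ∑ i, α i * X ω i)) ∂P :=
  calibrated_ps_loss_minimizer_general (mF := mF) P p X hX M hXbdd A hA hAbin a ha αs hPS w hw hwb
end

section
/- Let (Ω, 𝓕, P) be a probability space, X : Ω → ℝ^{p+1} with ‖X‖_∞ ≤ M almost surely, A : Ω → {0,1}, Y : Ω → [0,1], and let g(u) = 1/(1 + e^{−u}) and ℓ(y, u) = log(1 + e^u) − y·u. Fix a ∈ {0,1} and suppose the outcome regression model is correct: E[1{A = a}·Y | σ(X)] = E[1{A = a} | σ(X)] · g(β*ᵀX) almost surely for some β* ∈ ℝ^{p+1}. Let w : ℝ^{p+1} → [0, M] be any measurable weight function. Then β* is a global minimizer of the weighted logistic loss L(β) := E[ w(X) · 1{A = a} · ℓ(Y, βᵀX) ] over β ∈ ℝ^{p+1};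 that is, L(β) ≥ L(β*) for all β ∈ ℝ^{p+1}. -/
/-!
Conditioning on `X` and pulling out `X`-measurable factors, the correct-model hypothesis says
that the score `E[w(X)·1{A=a}·(g(β*ᵀX) − Y)·φ(X)]` vanishes for every bounded `φ`. Since
`ℓ(y, ·)` is convex with derivative `g(u) − y`, the gradient inequality
`ℓ(Y, βᵀX) − ℓ(Y, β*ᵀX) ≥ (g(β*ᵀX) − Y)·(β − β*)ᵀX`, weighted by `w(X)·1{A=a} ≥ 0` and
integrated, gives `L(β) − L(β*) ≥ 0`.
-/

open MeasureTheory ProbabilityTheory Real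
open scoped ENNReal

noncomputable def logisticLoss (y u : ℝ) : ℝ := log (1 + exp u) - y * u

lemma sigmoid_mul_sub_le_log_one_add_exp_sub (u v : ℝ) :
    sigmoid v * (u - v) ≤ log (1 + exp u) - log (1 + exp v) := by
  -- `(1 + eᵘ) / (1 + eᵛ)` is the convex combination `(1 - σ v)·e⁰ + σ v·e^(u - v)`.
  have hconv : exp (sigmoid v * (u - v)) ≤ (1 - sigmoid v) + sigmoid v * exp (u - v) := by
    simpa using convexOn_exp.2 (Set.mem_univ 0) (Set.mem_univ (u - v))
      (sub_nonneg.2 (sigmoid_le_one v)) (sigmoid_nonneg v) (by ring)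
  have hcomb : (1 - sigmoid v) + sigmoid v * exp (u - v) = (1 + exp u) / (1 + exp v) := by
    rw [sigmoid_def, exp_sub, exp_neg]
    field_simp
    ring
  rw [← log_div (by positivity) (by positivity), ← log_exp (sigmoid v * (u - v))]
  exact log_le_log (exp_pos _) (hconv.trans_eq hcomb)

lemma sigmoid_sub_mul_sub_le_logisticLoss_sub (y u v : ℝ) :
    (sigmoid v - y) * (u - v) ≤ logisticLoss y u - logisticLoss y v := by
  have := sigmoid_mul_sub_le_log_one_add_exp_sub u v
  unfold logisticLoss
  linarith

lemma abs_log_one_add_exp_le (u : ℝ) : |log (1 + exp u)| ≤ log 2 + |u| := by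
  have h1 : 1 + exp u ≤ 2 * exp |u| := by
    linarith [exp_le_exp.2 (le_abs_self u), one_le_exp (abs_nonneg u)]
  rw [abs_of_nonneg (log_nonneg (by linarith [exp_pos u])), ← log_exp |u|,
    ← log_mul two_ne_zero (exp_ne_zero _)]
  exact log_le_log (by positivity) h1

section Integral

variable {Ω : Type*} {m mΩ : MeasurableSpace Ω} {P : Measure Ω}

lemma memLp_logisticLoss {Y U : Ω → ℝ} (hY : MemLp Y ∞ P) (hU : MemLp U ∞ P) :
    MemLp (fun ω => logisticLoss (Y ω) (U ω)) ∞ P := by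
  have hcont : Continuous fun u : ℝ => log (1 + exp u) :=
    (continuous_const.add continuous_exp).log fun u => (by positivity : (0 : ℝ) < 1 + exp u).ne'
  have hsoftplus : MemLp (fun ω => log (1 + exp (U ω))) ∞ P :=
    ((memLp_top_const (log 2)).add hU.norm).of_le (hcont.comp_aestronglyMeasurable hU.1)
      (ae_of_all _ fun ω => by
        simpa [abs_of_nonneg (add_nonneg (log_nonneg one_le_two) (abs_nonneg (U ω)))]
          using abs_log_one_add_exp_le (U ω))
  exact hsoftplus.sub (hU.mul' hY)

lemma memLp_top_of_forall_mem_Icc {f : Ω → ℝ} (hf : AEStronglyMeasurable f P) {C : ℝ}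
    (h : ∀ ω, f ω ∈ Set.Icc 0 C) : MemLp f ∞ P :=
  memLp_top_of_bound hf C (ae_of_all _ fun ω => by
    rw [Real.norm_eq_abs, abs_of_nonneg (h ω).1]
    exact (h ω).2)

lemma integral_mul_condExp_of_stronglyMeasurable (hm : m ≤ mΩ) [SigmaFinite (P.trim hm)]
    {φ f : Ω → ℝ} (hφ : StronglyMeasurable[m] φ) (hφf : Integrable (φ * f) P)
    (hf : Integrable f P) :
    ∫ ω, φ ω * (P[f|m]) ω ∂P = ∫ ω, φ ω * f ω ∂P := by
  refine (integral_congr_ae (condExp_mul_of_stronglyMeasurable_left hφ hφf hf)).symm.trans ?_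
  exact integral_condExp hm

variable [IsFiniteMeasure P]

theorem integral_mul_mul_sub_eq_zero_of_condExp_mul_eq (hm : m ≤ mΩ) {φ q I Y : Ω → ℝ}
    (hφm : StronglyMeasurable[m] φ) (hqm : StronglyMeasurable[m] q) (hφ : MemLp φ ∞ P)
    (hq : MemLp q ∞ P) (hI : MemLp I ∞ P) (hY : MemLp Y ∞ P)
    (h : P[fun ω => I ω * Y ω|m] =ᵐ[P] fun ω => P[I|m] ω * q ω) :
    ∫ ω, φ ω * (I ω * (q ω - Y ω)) ∂P = 0 := by
  have hIY : MemLp (fun ω => I ω * Y ω) ∞ P := hY.mul' hI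
  have hφqI : Integrable (fun ω => φ ω * q ω * I ω) P :=
    (hI.mul' (hq.mul' hφ (r := ∞))).integrable le_top
  have hφIY : Integrable (fun ω => φ ω * (I ω * Y ω)) P :=
    (hIY.mul' hφ (r := ∞)).integrable le_top
  calc ∫ ω, φ ω * (I ω * (q ω - Y ω)) ∂P
      = ∫ ω, φ ω * q ω * I ω - φ ω * (I ω * Y ω) ∂P := by
        congr 1 with ω
        ring
    _ = ∫ ω, φ ω * q ω * (P[I|m]) ω ∂P
          - ∫ ω, φ ω * (P[fun ω => I ω * Y ω|m]) ω ∂P := by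
        rw [integral_sub hφqI hφIY]
        congr 1
        · exact (integral_mul_condExp_of_stronglyMeasurable hm (hφm.mul hqm) hφqI
            (hI.integrable le_top)).symm
        · exact (integral_mul_condExp_of_stronglyMeasurable hm hφm hφIY
            (hIY.integrable le_top)).symm
    _ = 0 := by
        rw [sub_eq_zero]
        refine integral_congr_ae ?_
        filter_upwards [h] with ω hω
        rw [hω]
        ring

theorem integral_mul_logisticLoss_le_of_condExp_mul_eq (hm : m ≤ mΩ) {I Y U V W : Ω → ℝ}
    (hI : MemLp I ∞ P) (hY : MemLp Y ∞ P) (hUm : StronglyMeasurable[m] U)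
    (hVm : StronglyMeasurable[m] V) (hWm : StronglyMeasurable[m] W) (hU : MemLp U ∞ P)
    (hV : MemLp V ∞ P) (hW : MemLp W ∞ P) (hWI : 0 ≤ᵐ[P] W * I)
    (h : P[fun ω => I ω * Y ω|m] =ᵐ[P] fun ω => P[I|m] ω * sigmoid (V ω)) :
    ∫ ω, W ω * I ω * logisticLoss (Y ω) (V ω) ∂P
      ≤ ∫ ω, W ω * I ω * logisticLoss (Y ω) (U ω) ∂P := by
  have hσm : StronglyMeasurable[m] fun ω => sigmoid (V ω) :=
    continuous_sigmoid.comp_stronglyMeasurable hVm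
  have hσ : MemLp (fun ω => sigmoid (V ω)) ∞ P :=
    memLp_top_of_bound (hσm.mono hm).aestronglyMeasurable 1 (ae_of_all _ fun ω => by
      simpa [abs_of_nonneg (sigmoid_nonneg _)] using sigmoid_le_one (V ω))
  have hWIℓ : ∀ {Z}, MemLp Z ∞ P →
      Integrable (fun ω => W ω * I ω * logisticLoss (Y ω) (Z ω)) P :=
    fun hZ => ((memLp_logisticLoss hY hZ).mul' (hI.mul' hW (r := ∞))).integrable le_top
  have hscore_int : Integrable
      (fun ω => W ω * (U ω - V ω) * (I ω * (sigmoid (V ω) - Y ω))) P :=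
    (((hσ.sub hY).mul' hI (r := ∞)).mul' ((hU.sub hV).mul' hW (r := ∞))).integrable le_top
  have hscore_zero : ∫ ω, W ω * (U ω - V ω) * (I ω * (sigmoid (V ω) - Y ω)) ∂P = 0 :=
    integral_mul_mul_sub_eq_zero_of_condExp_mul_eq hm (hWm.mul (hUm.sub hVm)) hσm
      ((hU.sub hV).mul' hW (r := ∞)) hσ hI hY h
  calc ∫ ω, W ω * I ω * logisticLoss (Y ω) (V ω) ∂P
      = ∫ ω, W ω * I ω * logisticLoss (Y ω) (V ω)
          + W ω * (U ω - V ω) * (I ω * (sigmoid (V ω) - Y ω)) ∂P := by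
        rw [integral_add (hWIℓ hV) hscore_int, hscore_zero, add_zero]
    _ ≤ ∫ ω, W ω * I ω * logisticLoss (Y ω) (U ω) ∂P := by
        refine integral_mono_ae ((hWIℓ hV).add hscore_int) (hWIℓ hU) ?_
        filter_upwards [hWI] with ω hω
        have := mul_le_mul_of_nonneg_left
          (sigmoid_sub_mul_sub_le_logisticLoss_sub (Y ω) (U ω) (V ω)) hω
        simp only [Pi.mul_apply] at this
        linarith

end Integral

theorem calibrated_or_loss_minimizer_general
    {Ω : Type*} [mF : MeasurableSpace Ω]
    (P : Measure Ω) [IsProbabilityMeasure P]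
    (p : ℕ) (X : Ω → (Fin (p + 1) → ℝ)) (hX : Measurable X)
    (M : ℝ)
    (hXbdd : ∀ᵐ ω ∂P, ∀ i, |X ω i| ≤ M)
    (A : Ω → ℝ) (hA : Measurable A)
    (Y : Ω → ℝ) (hYmeas : Measurable Y) (hYrange : ∀ ω, Y ω ∈ Set.Icc (0 : ℝ) 1)
    (a : ℝ)
    (βs : Fin (p + 1) → ℝ)
    (hOR : P[fun ω => (if A ω = a then (1 : ℝ) else 0) * Y ω|MeasurableSpace.comap X inferInstance]
      =ᵐ[P] fun ω =>
        (P[fun ω' => (if A ω' = a then (1 : ℝ) else 0)|MeasurableSpace.comap X inferInstance]) ω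
          * (1 / (1 + Real.exp (-(∑ i, βs i * X ω i)))))
    (w : (Fin (p + 1) → ℝ) → ℝ) (hw : Measurable w)
    (hwb : ∀ x, w x ∈ Set.Icc (0 : ℝ) M) :
    ∀ β : Fin (p + 1) → ℝ,
      (∫ ω, w (X ω) * (if A ω = a then (1 : ℝ) else 0)
          * (Real.log (1 + Real.exp (∑ i, βs i * X ω i)) - Y ω * ∑ i, βs i * X ω i) ∂P)
      ≤ ∫ ω, w (X ω) * (if A ω = a then (1 : ℝ) else 0)
          * (Real.log (1 + Real.exp (∑ i, β i * X ω i)) - Y ω * ∑ i, β i * X ω i) ∂P := by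
  intro β
  have hXm : Measurable[MeasurableSpace.comap X inferInstance] X := comap_measurable X
  have hlin : ∀ b : Fin (p + 1) → ℝ, Measurable fun x : Fin (p + 1) → ℝ => ∑ i, b i * x i :=
    fun b => by fun_prop
  have hXi : ∀ i, MemLp (fun ω => X ω i) ∞ P := fun i =>
    memLp_top_of_bound ((measurable_pi_apply i).comp hX).aestronglyMeasurable M
      (hXbdd.mono fun _ h => h i)
  have hlin_memLp : ∀ b : Fin (p + 1) → ℝ, MemLp (fun ω => ∑ i, b i * X ω i) ∞ P := fun b =>
    memLp_finsetSum _ fun i _ => (hXi i).const_mul (b i)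
  have hI : ∀ ω, (if A ω = a then (1 : ℝ) else 0) ∈ Set.Icc 0 1 := fun ω => by
    split_ifs <;> norm_num
  exact integral_mul_logisticLoss_le_of_condExp_mul_eq hX.comap_le
    (memLp_top_of_forall_mem_Icc (Measurable.ite (hA (measurableSet_singleton a))
      measurable_const measurable_const).aestronglyMeasurable hI)
    (memLp_top_of_forall_mem_Icc hYmeas.aestronglyMeasurable hYrange)
    ((hlin β).comp hXm).stronglyMeasurable ((hlin βs).comp hXm).stronglyMeasurable
    (hw.comp hXm).stronglyMeasurable (hlin_memLp β) (hlin_memLp βs)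
    (memLp_top_of_forall_mem_Icc (hw.comp hX).aestronglyMeasurable fun ω => hwb (X ω))
    (ae_of_all _ fun ω => mul_nonneg (hwb _).1 (hI ω).1)
    (by simpa only [one_div, ← sigmoid_def] using hOR)

/-- **Model robustness of the calibrated outcome-regression loss.**
If the logistic outcome model is correct,
`E[1{A=a}·Y ∣ σ(X)] = E[1{A=a} ∣ σ(X)]·g(β*ᵀX)` a.s. with `g(u) = 1/(1+e^{−u})`, then for
any measurable weight `w : ℝ^{p+1} → [0,M]` the weighted logistic loss
`L(β) = E[w(X)·1{A=a}·ℓ(Y, βᵀX)]`, with `ℓ(y,u) = log(1+eᵘ) − y·u`, is globally minimized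
at `β = β*`. -/
theorem calibrated_or_loss_minimizer
    {Ω : Type*} [mF : MeasurableSpace Ω]
    (P : Measure Ω) [IsProbabilityMeasure P]
    (p : ℕ) (X : Ω → (Fin (p + 1) → ℝ)) (hX : Measurable X)
    (M : ℝ) (hM : 0 < M)
    (hXbdd : ∀ᵐ ω ∂P, ∀ i, |X ω i| ≤ M)
    (A : Ω → ℝ) (hA : Measurable A) (hAbin : ∀ ω, A ω = 0 ∨ A ω = 1)
    (Y : Ω → ℝ) (hYmeas : Measurable Y) (hYrange : ∀ ω, Y ω ∈ Set.Icc (0 : ℝ) 1)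
    (a : ℝ) (ha : a = 0 ∨ a = 1)
    (βs : Fin (p + 1) → ℝ)
    (hOR : P[fun ω => (if A ω = a then (1 : ℝ) else 0) * Y ω|MeasurableSpace.comap X inferInstance]
      =ᵐ[P] fun ω =>
        (P[fun ω' => (if A ω' = a then (1 : ℝ) else 0)|MeasurableSpace.comap X inferInstance]) ω
          * (1 / (1 + Real.exp (-(∑ i, βs i * X ω i)))))
    (w : (Fin (p + 1) → ℝ) → ℝ) (hw : Measurable w)
    (hwb : ∀ x, w x ∈ Set.Icc (0 : ℝ) M) :
    ∀ β : Fin (p + 1) → ℝ,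
      (∫ ω, w (X ω) * (if A ω = a then (1 : ℝ) else 0)
          * (Real.log (1 + Real.exp (∑ i, βs i * X ω i)) - Y ω * ∑ i, βs i * X ω i) ∂P)
      ≤ ∫ ω, w (X ω) * (if A ω = a then (1 : ℝ) else 0)
          * (Real.log (1 + Real.exp (∑ i, β i * X ω i)) - Y ω * ∑ i, β i * X ω i) ∂P :=
  calibrated_or_loss_minimizer_general (mF := mF) P p X hX M hXbdd A hA Y hYmeas hYrange a βs hOR w
    hw hwb
end

section
/- Let (Ω, 𝓕, P) be a probability space, A : Ω → {0,1}, Y : Ω → ℝ with |Y| ≤ M almost surely, and 𝓖_X ⊆ 𝓕 a sub-σ-algebra. Let π₁ = E[A | 𝓖_X] with π₁ ∈ [1/M, 1 − 1/M] a.s., π₀ = 1 − π₁, and μ₁, μ₀ the 𝓖_X-measurable outcome regressions with μₐπₐ = E[1{A=a}Y | 𝓖_X] a.s. Let δ_π, δ_μ₁, δ_μ₀ be bounded 𝓖_X-measurable perturbation directions, and for t in a neighborhood of 0 small enough that π₁ + t·δ_π ∈ [1/(2M), 1 − 1/(2M)] a.s., define F(t) := E[ (μ₁ + tδ_μ₁)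 − (μ₀ + tδ_μ₀) + A(Y − μ₁ − tδ_μ₁)/(π₁ + tδ_π) − (1−A)(Y − μ₀ − tδ_μ₀)/(π₀ − tδ_π) ]. Then F is differentiable at t = 0 with F′(0) = 0 (Neyman orthogonality of the AIPW functional at the true nuisance functions). -/
/-!
Conditionally on `𝓖X`, the score of arm `a` along the path has expectation
`μₐ + t² δμₐ δπₐ / (πₐ + t δπₐ)` (with `δπ₀ = -δπ`): the first-order terms cancel because
`E[A | 𝓖X] = π₁` and `E[A Y | 𝓖X] = μ₁ π₁`, and likewise for `1 - A`. Hence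
`F t - F 0 = O(t²)`, so `F' 0 = 0`.
-/

open MeasureTheory ProbabilityTheory Filter Topology Asymptotics

theorem hasDerivAt_zero_of_abs_sub_le_mul_sq {f : ℝ → ℝ} {x K : ℝ}
    (h : ∀ᶠ y in 𝓝 x, |f y - f x| ≤ K * (y - x) ^ 2) : HasDerivAt f 0 x := by
  refine hasDerivAt_iff_isLittleO.2 <|
    IsBigO.trans_isLittleO (IsBigO.of_bound K ?_) (isLittleO_pow_sub_sub x one_lt_two)
  filter_upwards [h] with y hy
  simpa [Real.norm_eq_abs, sq_abs] using hy

section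

variable {Ω : Type*} {m mΩ : MeasurableSpace Ω} {P : Measure Ω}

theorem ae_abs_add_mul_le {f g : Ω → ℝ} {K C : ℝ} (t : ℝ) (hf : ∀ᵐ ω ∂P, |f ω| ≤ K)
    (hg : ∀ᵐ ω ∂P, |g ω| ≤ C) : ∀ᵐ ω ∂P, |f ω + t * g ω| ≤ K + |t| * C := by
  filter_upwards [hf, hg] with ω hfω hgω
  calc |f ω + t * g ω| ≤ |f ω| + |t| * |g ω| := by rw [← abs_mul]; exact abs_add_le _ _
    _ ≤ K + |t| * C := by gcongr

theorem ae_abs_div_le {f q : Ω → ℝ} {R c : ℝ} (hc : 0 < c) (hf : ∀ᵐ ω ∂P, |f ω| ≤ R)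
    (hq : ∀ᵐ ω ∂P, c ≤ q ω) : ∀ᵐ ω ∂P, |f ω / q ω| ≤ R / c := by
  filter_upwards [hf, hq] with ω hfω hqω
  rw [abs_div, abs_of_pos (hc.trans_le hqω)]
  exact div_le_div₀ ((abs_nonneg _).trans hfω) hfω hc hqω

theorem ae_abs_le_div_of_mul_eq_condExp {μ p Z : Ω → ℝ} {c R : ℝ} (hc : 0 < c)
    (hp : ∀ᵐ ω ∂P, c ≤ p ω) (hZ : ∀ᵐ ω ∂P, |Z ω| ≤ R)
    (hμ : (fun ω => μ ω * p ω) =ᵐ[P] P[Z|m]) : ∀ᵐ ω ∂P, |μ ω| ≤ R / c := by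
  have hbdd : ∀ᵐ ω ∂P, |μ ω * p ω| ≤ R := by
    filter_upwards [hμ, ae_bdd_abs_condExp_of_ae_bdd_abs (m := m) hZ] with ω h1 h2
    rwa [h1]
  filter_upwards [ae_abs_div_le hc hbdd hp, hp] with ω h hpω
  rwa [mul_div_cancel_right₀ _ (hc.trans_le hpω).ne'] at h

/-- The true nuisances of one treatment arm: `D = 1{A = a}`, `p = πₐ` and `μ = μₐ`. -/
structure IsArm (m : MeasurableSpace Ω) (P : @Measure Ω mΩ) (D Y p μ : Ω → ℝ) : Prop where
  integrable_indicator : Integrable D P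
  integrable_mul : Integrable (fun ω => D ω * Y ω) P
  measurable_propensity : Measurable[m] p
  measurable_regression : Measurable[m] μ
  propensity_ae_eq : p =ᵐ[P] P[D|m]
  regression_ae_eq : (fun ω => μ ω * p ω) =ᵐ[P] P[fun ω => D ω * Y ω|m]

theorem IsArm.one_sub [IsFiniteMeasure P] (hm : m ≤ mΩ) {D Y p μ μ' : Ω → ℝ}
    (h : IsArm m P D Y p μ) (hY : Integrable Y P) (hμ'm : Measurable[m] μ')
    (hμ' : (fun ω => μ' ω * (1 - p ω)) =ᵐ[P] P[fun ω => (1 - D ω) * Y ω|m]) :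
    IsArm m P (fun ω => 1 - D ω) Y (fun ω => 1 - p ω) μ' where
  integrable_indicator := (integrable_const 1).sub h.integrable_indicator
  integrable_mul := (hY.sub h.integrable_mul).congr (.of_forall fun ω => by simp [sub_mul])
  measurable_propensity := measurable_const.sub h.measurable_propensity
  measurable_regression := hμ'm
  propensity_ae_eq := by
    filter_upwards [condExp_sub (integrable_const (1 : ℝ)) h.integrable_indicator m,
      h.propensity_ae_eq] with ω h1 h2
    change _ = P[(fun _ => (1 : ℝ)) - D|m] ω
    rw [h1, condExp_const hm, Pi.sub_apply, h2]
  regression_ae_eq := hμ'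

/-- One arm's part of the AIPW score along the path `t ↦ (p + t δp, μ + t δμ)`: the AIPW score
is that of the treated arm minus that of the untreated arm, whose propensity moves by `-δπ`. -/
noncomputable def armScore (D Y p μ δp δμ : Ω → ℝ) (t : ℝ) (ω : Ω) : ℝ :=
  μ ω + t * δμ ω + D ω * (Y ω - μ ω - t * δμ ω) / (p ω + t * δp ω)

theorem armScore_eq (D Y p μ δp δμ : Ω → ℝ) (t : ℝ) :
    armScore D Y p μ δp δμ t = fun ω => (μ ω + t * δμ ω)
      + 1 / (p ω + t * δp ω) * (D ω * Y ω)
      - (μ ω + t * δμ ω) / (p ω + t * δp ω) * D ω := by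
  funext ω
  simp only [armScore]
  ring

variable {D Y p μ δp δμ : Ω → ℝ} {t c K C : ℝ}

section

variable [IsFiniteMeasure P]

theorem integrable_armScore_terms (hm : m ≤ mΩ) (h : IsArm m P D Y p μ)
    (hδpm : Measurable[m] δp) (hδμm : Measurable[m] δμ) (hc : 0 < c)
    (hq : ∀ᵐ ω ∂P, c ≤ p ω + t * δp ω) (hμK : ∀ᵐ ω ∂P, |μ ω| ≤ K)
    (hδμ : ∀ᵐ ω ∂P, |δμ ω| ≤ C) :
    Integrable (fun ω => μ ω + t * δμ ω) P ∧
      Integrable (fun ω => 1 / (p ω + t * δp ω) * (D ω * Y ω)) P ∧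
      Integrable (fun ω => (μ ω + t * δμ ω) / (p ω + t * δp ω) * D ω) P := by
  have hsm : Measurable[m] fun ω => μ ω + t * δμ ω :=
    h.measurable_regression.add (hδμm.const_mul t)
  have hqm : Measurable[m] fun ω => p ω + t * δp ω :=
    h.measurable_propensity.add (hδpm.const_mul t)
  have hsK := ae_abs_add_mul_le t hμK hδμ
  have hinv : ∀ᵐ ω ∂P, |1 / (p ω + t * δp ω)| ≤ 1 / c :=
    ae_abs_div_le hc (.of_forall fun _ => abs_one.le) hq
  have hsq := ae_abs_div_le hc hsK hq
  simp only [← Real.norm_eq_abs] at hsK hinv hsq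
  exact ⟨.of_bound (hsm.mono hm le_rfl).aestronglyMeasurable _ hsK,
    h.integrable_mul.bdd_mul ((measurable_const.div hqm).mono hm le_rfl).aestronglyMeasurable hinv,
    h.integrable_indicator.bdd_mul ((hsm.div hqm).mono hm le_rfl).aestronglyMeasurable hsq⟩

theorem integrable_armScore (hm : m ≤ mΩ) (h : IsArm m P D Y p μ)
    (hδpm : Measurable[m] δp) (hδμm : Measurable[m] δμ) (hc : 0 < c)
    (hq : ∀ᵐ ω ∂P, c ≤ p ω + t * δp ω) (hμK : ∀ᵐ ω ∂P, |μ ω| ≤ K)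
    (hδμ : ∀ᵐ ω ∂P, |δμ ω| ≤ C) :
    Integrable (armScore D Y p μ δp δμ t) P := by
  obtain ⟨hs, h1, h2⟩ := integrable_armScore_terms hm h hδpm hδμm hc hq hμK hδμ
  rw [armScore_eq]
  exact (hs.add h1).sub h2

theorem condExp_armScore (hm : m ≤ mΩ) (h : IsArm m P D Y p μ)
    (hδpm : Measurable[m] δp) (hδμm : Measurable[m] δμ) (hc : 0 < c)
    (hq : ∀ᵐ ω ∂P, c ≤ p ω + t * δp ω) (hμK : ∀ᵐ ω ∂P, |μ ω| ≤ K)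
    (hδμ : ∀ᵐ ω ∂P, |δμ ω| ≤ C) :
    P[armScore D Y p μ δp δμ t|m] =ᵐ[P]
      fun ω => μ ω + t ^ 2 * (δμ ω * δp ω / (p ω + t * δp ω)) := by
  obtain ⟨hs, h1, h2⟩ := integrable_armScore_terms hm h hδpm hδμm hc hq hμK hδμ
  have hsm : Measurable[m] fun ω => μ ω + t * δμ ω :=
    h.measurable_regression.add (hδμm.const_mul t)
  have hqm : Measurable[m] fun ω => p ω + t * δp ω :=
    h.measurable_propensity.add (hδpm.const_mul t)
  have hsplit : P[armScore D Y p μ δp δμ t|m] =ᵐ[P]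
      P[fun ω => μ ω + t * δμ ω|m]
        + P[(fun ω => 1 / (p ω + t * δp ω)) * (fun ω => D ω * Y ω)|m]
        - P[(fun ω => (μ ω + t * δμ ω) / (p ω + t * δp ω)) * D|m] := by
    rw [armScore_eq]
    exact (condExp_sub (hs.add h1) h2 m).trans
      ((condExp_add hs h1 m).sub Filter.EventuallyEq.rfl)
  have hpull₁ := condExp_mul_of_stronglyMeasurable_left
    (f := fun ω => 1 / (p ω + t * δp ω)) (measurable_const.div hqm).stronglyMeasurable
    h1 h.integrable_mul
  have hpull₂ := condExp_mul_of_stronglyMeasurable_left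
    (f := fun ω => (μ ω + t * δμ ω) / (p ω + t * δp ω)) (hsm.div hqm).stronglyMeasurable
    h2 h.integrable_indicator
  filter_upwards [hsplit, hpull₁, hpull₂, h.propensity_ae_eq, h.regression_ae_eq, hq]
    with ω h0 e1 e2 ep eμ hqω
  have hqω' : p ω + t * δp ω ≠ 0 := (hc.trans_le hqω).ne'
  rw [h0, Pi.sub_apply, Pi.add_apply, e1, e2, Pi.mul_apply, Pi.mul_apply, ← ep, ← eμ,
    condExp_of_stronglyMeasurable hm hsm.stronglyMeasurable hs]
  field_simp
  ring

end

theorem abs_integral_armScore_sub_le [IsProbabilityMeasure P] (hm : m ≤ mΩ)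
    (h : IsArm m P D Y p μ) (hδpm : Measurable[m] δp) (hδμm : Measurable[m] δμ)
    (hc : 0 < c) (hq₀ : ∀ᵐ ω ∂P, c ≤ p ω) (hq : ∀ᵐ ω ∂P, c ≤ p ω + t * δp ω)
    (hμK : ∀ᵐ ω ∂P, |μ ω| ≤ K) (hδp : ∀ᵐ ω ∂P, |δp ω| ≤ C) (hδμ : ∀ᵐ ω ∂P, |δμ ω| ≤ C) :
    |∫ ω, armScore D Y p μ δp δμ t ω ∂P - ∫ ω, armScore D Y p μ δp δμ 0 ω ∂P|
      ≤ C * C / c * t ^ 2 := by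
  have hR : ∀ᵐ ω ∂P, |δμ ω * δp ω / (p ω + t * δp ω)| ≤ C * C / c := by
    refine ae_abs_div_le hc ?_ hq
    filter_upwards [hδμ, hδp] with ω h1 h2
    rw [abs_mul]
    exact mul_le_mul h1 h2 (abs_nonneg _) ((abs_nonneg _).trans h1)
  simp only [← Real.norm_eq_abs] at hR
  have hμI : Integrable μ P :=
    .of_bound (h.measurable_regression.mono hm le_rfl).aestronglyMeasurable K
      (by simpa only [Real.norm_eq_abs] using hμK)
  have hRI : Integrable (fun ω => δμ ω * δp ω / (p ω + t * δp ω)) P :=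
    .of_bound (((hδμm.mul hδpm).div (h.measurable_propensity.add (hδpm.const_mul t))).mono hm
      le_rfl).aestronglyMeasurable _ hR
  rw [← integral_condExp hm, ← integral_condExp hm (f := armScore D Y p μ δp δμ 0),
    integral_congr_ae (condExp_armScore hm h hδpm hδμm hc hq hμK hδμ),
    integral_congr_ae (condExp_armScore hm h hδpm hδμm hc (by simpa using hq₀) hμK hδμ),
    integral_add hμI (hRI.const_mul _), integral_const_mul]
  simp only [zero_pow two_ne_zero, zero_mul, add_zero, add_sub_cancel_left, abs_mul,
    abs_pow, sq_abs]
  rw [mul_comm]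
  gcongr
  simpa using norm_integral_le_of_norm_le_const hR

theorem hasDerivAt_integral_armScore [IsProbabilityMeasure P] (hm : m ≤ mΩ)
    (h : IsArm m P D Y p μ) (hδpm : Measurable[m] δp) (hδμm : Measurable[m] δμ) {ε R : ℝ}
    (hc : 0 < c) (hε : 0 < ε) (hq : ∀ t : ℝ, |t| < ε → ∀ᵐ ω ∂P, c ≤ p ω + t * δp ω)
    (hDY : ∀ᵐ ω ∂P, |D ω * Y ω| ≤ R) (hδp : ∀ᵐ ω ∂P, |δp ω| ≤ C)
    (hδμ : ∀ᵐ ω ∂P, |δμ ω| ≤ C) :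
    (∀ᶠ t in 𝓝 0, Integrable (armScore D Y p μ δp δμ t) P) ∧
      HasDerivAt (fun t => ∫ ω, armScore D Y p μ δp δμ t ω ∂P) 0 0 := by
  have hball : ∀ᶠ t in 𝓝 (0 : ℝ), |t| < ε := by
    filter_upwards [Metric.ball_mem_nhds 0 hε] with t ht
    simpa using ht
  have hq₀ : ∀ᵐ ω ∂P, c ≤ p ω := by simpa using hq 0 (by simpa)
  have hμK := ae_abs_le_div_of_mul_eq_condExp hc hq₀ hDY h.regression_ae_eq
  refine ⟨hball.mono fun t ht => integrable_armScore hm h hδpm hδμm hc (hq t ht) hμK hδμ,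
    hasDerivAt_zero_of_abs_sub_le_mul_sq (K := C * C / c) ?_⟩
  filter_upwards [hball] with t ht
  simpa using abs_integral_armScore_sub_le hm h hδpm hδμm hc hq₀ (hq t ht) hμK hδp hδμ

end

theorem aipw_neyman_orthogonality_general
    {Ω : Type*} (𝓖X : MeasurableSpace Ω) [mF : MeasurableSpace Ω]
    (P : Measure Ω) [IsProbabilityMeasure P]
    (h𝓖X : 𝓖X ≤ mF)
    (M : ℝ) (hM : 1 < M)
    (A Y : Ω → ℝ)
    (hA : Measurable A) (hAbin : ∀ ω, A ω = 0 ∨ A ω = 1)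
    (hYmeas : Measurable Y) (hYbdd : ∀ᵐ ω ∂P, |Y ω| ≤ M)
    (π1 μ1 μ0 : Ω → ℝ)
    (hπ1meas : Measurable[𝓖X] π1) (hπ1 : π1 =ᵐ[P] P[A|𝓖X])
    (hμ1meas : Measurable[𝓖X] μ1) (hμ0meas : Measurable[𝓖X] μ0)
    (hμ1 : (fun ω => μ1 ω * π1 ω) =ᵐ[P] P[fun ω => A ω * Y ω|𝓖X])
    (hμ0 : (fun ω => μ0 ω * (1 - π1 ω)) =ᵐ[P] P[fun ω => (1 - A ω) * Y ω|𝓖X])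
    (δπ δμ1 δμ0 : Ω → ℝ)
    (hδπmeas : Measurable[𝓖X] δπ) (hδμ1meas : Measurable[𝓖X] δμ1)
    (hδμ0meas : Measurable[𝓖X] δμ0)
    (C : ℝ)
    (hδbdd : ∀ᵐ ω ∂P, |δπ ω| ≤ C ∧ |δμ1 ω| ≤ C ∧ |δμ0 ω| ≤ C)
    (ε : ℝ) (hε : 0 < ε)
    (hrange : ∀ t : ℝ, |t| < ε →
      ∀ᵐ ω ∂P, π1 ω + t * δπ ω ∈ Set.Icc (1 / (2 * M)) (1 - 1 / (2 * M))) :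
    HasDerivAt (fun t : ℝ =>
      ∫ ω, ((μ1 ω + t * δμ1 ω) - (μ0 ω + t * δμ0 ω)
        + A ω * (Y ω - μ1 ω - t * δμ1 ω) / (π1 ω + t * δπ ω)
        - (1 - A ω) * (Y ω - μ0 ω - t * δμ0 ω) / ((1 - π1 ω) - t * δπ ω)) ∂P)
      0 0 := by
  set c := 1 / (2 * M)
  have hc : 0 < c := by positivity
  have hAY : ∀ᵐ ω ∂P, |A ω * Y ω| ≤ M ∧ |(1 - A ω) * Y ω| ≤ M := by
    filter_upwards [hYbdd] with ω hYω
    rcases hAbin ω with h | h <;> simp [h, hYω, (abs_nonneg _).trans hYω]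
  have arm₁ : IsArm 𝓖X P A Y π1 μ1 :=
    ⟨.of_bound hA.aestronglyMeasurable 1
        (.of_forall fun ω => by rcases hAbin ω with h | h <;> simp [h]),
      .of_bound (hA.mul hYmeas).aestronglyMeasurable M (hAY.mono fun _ h => by simpa using h.1),
      hπ1meas, hμ1meas, hπ1, hμ1⟩
  have arm₀ := arm₁.one_sub h𝓖X
    (.of_bound hYmeas.aestronglyMeasurable M (by simpa only [Real.norm_eq_abs] using hYbdd))
    hμ0meas hμ0
  obtain ⟨hI₁, hd₁⟩ := hasDerivAt_integral_armScore h𝓖X arm₁ hδπmeas hδμ1meas hc hε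
    (fun t ht => (hrange t ht).mono fun _ h => h.1) (hAY.mono fun _ h => h.1)
    (hδbdd.mono fun _ h => h.1) (hδbdd.mono fun _ h => h.2.1)
  obtain ⟨hI₀, hd₀⟩ := hasDerivAt_integral_armScore h𝓖X arm₀ hδπmeas.neg hδμ0meas hc hε
    (fun t ht => (hrange t ht).mono fun _ h => by simp only [Pi.neg_apply]; linarith [h.2])
    (hAY.mono fun _ h => h.2) (hδbdd.mono fun _ h => by simpa using h.1)
    (hδbdd.mono fun _ h => h.2.2)
  refine (sub_self (0 : ℝ) ▸ hd₁.sub hd₀).congr_of_eventuallyEq ?_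
  filter_upwards [hI₁, hI₀] with t h₁ h₀
  rw [Pi.sub_apply, ← integral_sub h₁ h₀]
  congr 1 with ω
  simp only [armScore, Pi.neg_apply]
  ring

/-- **Neyman orthogonality of the AIPW functional at the true nuisance functions.**
With true nuisances `π₁ = E[A ∣ 𝓖X] ∈ [1/M, 1−1/M]` a.s., `π₀ = 1−π₁`,
`μₐπₐ = E[1{A=a}Y ∣ 𝓖X]` a.s., and bounded `𝓖X`-measurable perturbation directions
`δπ, δμ₁, δμ₀`, if for all `|t| < ε` one has `π₁ + t·δπ ∈ [1/(2M), 1−1/(2M)]` a.s., then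
`F(t) = E[(μ₁+tδμ₁) − (μ₀+tδμ₀) + A(Y−μ₁−tδμ₁)/(π₁+tδπ) − (1−A)(Y−μ₀−tδμ₀)/(π₀−tδπ)]`
is differentiable at `t = 0` with `F′(0) = 0`. -/
theorem aipw_neyman_orthogonality
    {Ω : Type*} (𝓖X : MeasurableSpace Ω) [mF : MeasurableSpace Ω]
    (P : Measure Ω) [IsProbabilityMeasure P]
    (h𝓖X : 𝓖X ≤ mF)
    (M : ℝ) (hM : 1 < M)
    (A Y : Ω → ℝ)
    (hA : Measurable A) (hAbin : ∀ ω, A ω = 0 ∨ A ω = 1)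
    (hYmeas : Measurable Y) (hYbdd : ∀ᵐ ω ∂P, |Y ω| ≤ M)
    (π1 μ1 μ0 : Ω → ℝ)
    (hπ1meas : Measurable[𝓖X] π1) (hπ1 : π1 =ᵐ[P] P[A|𝓖X])
    (hoverlap : ∀ᵐ ω ∂P, π1 ω ∈ Set.Icc (1 / M) (1 - 1 / M))
    (hμ1meas : Measurable[𝓖X] μ1) (hμ0meas : Measurable[𝓖X] μ0)
    (hμ1 : (fun ω => μ1 ω * π1 ω) =ᵐ[P] P[fun ω => A ω * Y ω|𝓖X])
    (hμ0 : (fun ω => μ0 ω * (1 - π1 ω)) =ᵐ[P] P[fun ω => (1 - A ω) * Y ω|𝓖X])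
    (δπ δμ1 δμ0 : Ω → ℝ)
    (hδπmeas : Measurable[𝓖X] δπ) (hδμ1meas : Measurable[𝓖X] δμ1)
    (hδμ0meas : Measurable[𝓖X] δμ0)
    (C : ℝ)
    (hδbdd : ∀ᵐ ω ∂P, |δπ ω| ≤ C ∧ |δμ1 ω| ≤ C ∧ |δμ0 ω| ≤ C)
    (ε : ℝ) (hε : 0 < ε)
    (hrange : ∀ t : ℝ, |t| < ε →
      ∀ᵐ ω ∂P, π1 ω + t * δπ ω ∈ Set.Icc (1 / (2 * M)) (1 - 1 / (2 * M))) :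
    HasDerivAt (fun t : ℝ =>
      ∫ ω, ((μ1 ω + t * δμ1 ω) - (μ0 ω + t * δμ0 ω)
        + A ω * (Y ω - μ1 ω - t * δμ1 ω) / (π1 ω + t * δπ ω)
        - (1 - A ω) * (Y ω - μ0 ω - t * δμ0 ω) / ((1 - π1 ω) - t * δπ ω)) ∂P)
      0 0 :=
  aipw_neyman_orthogonality_general 𝓖X (mF := mF) P h𝓖X M hM A Y hA hAbin hYmeas hYbdd π1 μ1 μ0
    hπ1meas hπ1 hμ1meas hμ0meas hμ1 hμ0 δπ δμ1 δμ0 hδπmeas hδμ1meas hδμ0meas C hδbdd ε hε hrange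
end

section
/- Let (Ω, 𝓕, P) be a probability space, 𝓖 ⊆ 𝓕 and 𝓖_W ⊆ 𝓖 sub-σ-algebras, φ a square-integrable 𝓖-measurable real random variable with E[φ] = 0, and g a version of E[φ | 𝓖_W]. Let R : Ω → {0,1} with E[R] = ρ ∈ (0,1) and σ(R) independent of 𝓖, and set φ_SSL := g + (R/ρ)(φ − g). Then ρ·Var(φ_SSL) ≤ Var(φ), with equality if and only if g = 0 almost surely. -/
/-!
Write `h = φ - g`. As `g` is the conditional expectation of `φ`, the residual `h` has mean zero
and is uncorrelated with `g`, so `Var φ = Var g + Var h`. The indicator `R` is independent of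
the `𝓖`-measurable `h` and `g h`, and `R² = R` with `E R = ρ`; hence `(R/ρ) h` is still
uncorrelated with `g` and has variance `Var h / ρ`. Therefore
`ρ Var φ_SSL = ρ Var g + Var h = Var φ - (1 - ρ) Var g`, and `Var g = E g²` vanishes iff `g = 0`
almost surely.
-/

open MeasureTheory ProbabilityTheory

namespace ProbabilityTheory

variable {Ω : Type*} {mΩ : MeasurableSpace Ω} {μ : Measure Ω} {X Y R : Ω → ℝ}

lemma indepFun_of_indep_comap {m : MeasurableSpace Ω}
    (hR : Indep (MeasurableSpace.comap R inferInstance) m μ) (hY : Measurable[m] Y) :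
    IndepFun R Y μ := by
  rw [IndepFun_iff_Indep]
  exact indep_of_indep_of_le_right hR hY.comap_le

lemma IndepFun.sq (h : IndepFun R Y μ) : IndepFun (fun ω ↦ R ω ^ 2) (fun ω ↦ Y ω ^ 2) μ :=
  h.comp (φ := fun x : ℝ ↦ x ^ 2) (ψ := fun x : ℝ ↦ x ^ 2) (by fun_prop) (by fun_prop)

lemma IndepFun.memLp_two_mul (h : IndepFun R Y μ) (hR : MemLp R 2 μ) (hY : MemLp Y 2 μ) :
    MemLp (R * Y) 2 μ := by
  refine (memLp_two_iff_integrable_sq (hR.1.mul hY.1)).2 ?_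
  exact (h.sq.integrable_mul hR.integrable_sq hY.integrable_sq).congr
    (.of_forall fun ω ↦ (mul_pow (R ω) (Y ω) 2).symm)

variable [IsProbabilityMeasure μ]

lemma IndepFun.variance_mul (h : IndepFun R Y μ) (hR : MemLp R 2 μ) (hY : MemLp Y 2 μ) :
    Var[R * Y; μ] = (∫ ω, R ω ^ 2 ∂μ) * (∫ ω, Y ω ^ 2 ∂μ) - (μ[R] * μ[Y]) ^ 2 := by
  rw [variance_eq_sub (h.memLp_two_mul hR hY), ← h.integral_mul_eq_mul_integral hR.1 hY.1,
    ← h.sq.integral_fun_mul_eq_mul_integral hR.integrable_sq.1 hY.integrable_sq.1]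
  simp [mul_pow]

lemma covariance_mul_right_of_indepFun (hRY : IndepFun R Y μ) (hRXY : IndepFun R (X * Y) μ)
    (hR : MemLp R 2 μ) (hX : MemLp X 2 μ) (hY : MemLp Y 2 μ) :
    cov[X, R * Y; μ] = μ[R] * cov[X, Y; μ] := by
  have hXRY : X * (R * Y) = R * (X * Y) := by ring
  rw [covariance_eq_sub hX (hRY.memLp_two_mul hR hY), hXRY,
    hRXY.integral_mul_eq_mul_integral hR.1 (hX.1.mul hY.1),
    hRY.integral_mul_eq_mul_integral hR.1 hY.1, covariance_eq_sub hX hY]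
  ring

lemma integral_sub_eq_zero_of_ae_eq_condExp {m : MeasurableSpace Ω} (hm : m ≤ mΩ)
    (hX : Integrable X μ) (hY : Y =ᵐ[μ] μ[X|m]) : μ[X - Y] = 0 := by
  rw [integral_sub' hX (integrable_condExp.congr hY.symm), integral_congr_ae hY,
    integral_condExp hm, sub_self]

lemma covariance_sub_eq_zero_of_ae_eq_condExp {m : MeasurableSpace Ω} (hm : m ≤ mΩ)
    (hX : MemLp X 2 μ) (hY : Y =ᵐ[μ] μ[X|m]) : cov[Y, X - Y; μ] = 0 := by
  set Z := μ[X|m]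
  have hZ : MemLp Z 2 μ := hX.condExp one_le_two
  have hYL2 : MemLp Y 2 μ := hZ.ae_eq hY.symm
  have hres : μ[X - Z|m] =ᵐ[μ] 0 := by
    filter_upwards
      [condExp_sub (hX.integrable one_le_two) (integrable_condExp (m := m) (f := X)) m,
      condExp_condExp_of_le (le_refl m) hm (f := X) (μ := μ)] with ω h₁ h₂
    simp [h₁, h₂, Z]
  have hprod : μ[Y * (X - Y)] = 0 :=
    calc (μ[Y * (X - Y)] : ℝ) = μ[Z * (X - Z)] :=
          integral_congr_ae (by filter_upwards [hY] with ω hω; simp [hω, Z])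
      _ = μ[μ[Z * (X - Z)|m]] := (integral_condExp hm).symm
      _ = μ[Z * μ[X - Z|m]] := integral_congr_ae <|
          condExp_mul_of_stronglyMeasurable_left stronglyMeasurable_condExp
            (hZ.integrable_mul (hX.sub hZ)) ((hX.sub hZ).integrable one_le_two)
      _ = 0 := by rw [integral_congr_ae hres.mul_left]; simp
  rw [covariance_eq_sub hYL2 (hX.sub hYL2), hprod,
    integral_sub_eq_zero_of_ae_eq_condExp hm (hX.integrable one_le_two) hY, mul_zero, sub_zero]

lemma variance_eq_zero_iff_of_integral_eq_zero (hX : MemLp X 2 μ) (hXmean : μ[X] = 0) :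
    Var[X; μ] = 0 ↔ X =ᵐ[μ] 0 :=
  ⟨fun h ↦ (ae_eq_integral_of_variance_eq_zero hX h).mono fun _ hω ↦ hω.trans hXmean,
    fun h ↦ (variance_congr h).trans (variance_zero μ)⟩

lemma variance_add_div_mul_of_indepFun {ρ : ℝ} (hρ : ρ ≠ 0) (hRmeas : Measurable R)
    (hRbin : ∀ ω, R ω = 0 ∨ R ω = 1) (hRmean : μ[R] = ρ) (hRY : IndepFun R Y μ)
    (hRXY : IndepFun R (X * Y) μ) (hX : MemLp X 2 μ) (hY : MemLp Y 2 μ) (hYmean : μ[Y] = 0) :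
    Var[fun ω ↦ X ω + R ω / ρ * Y ω; μ] = Var[X; μ] + 2 * cov[X, Y; μ] + ρ⁻¹ * Var[Y; μ] := by
  have hR : MemLp R 2 μ := MemLp.of_bound hRmeas.aestronglyMeasurable 1
    (.of_forall fun ω ↦ by rcases hRbin ω with h | h <;> simp [h])
  have hRsq : ∫ ω, R ω ^ 2 ∂μ = ρ := by
    rw [← hRmean]; congr 1; ext ω; rcases hRbin ω with h | h <;> simp [h]
  have hS : (fun ω ↦ X ω + R ω / ρ * Y ω) = X + ρ⁻¹ • (R * Y) := by
    ext ω; simp only [Pi.add_apply, Pi.smul_apply, Pi.mul_apply, smul_eq_mul]; ring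
  rw [hS, variance_add hX ((hRY.memLp_two_mul hR hY).const_smul _), covariance_smul_right,
    variance_smul, covariance_mul_right_of_indepFun hRY hRXY hR hX hY, hRY.variance_mul hR hY,
    hRmean, hRsq, hYmean, variance_of_integral_eq_zero hY.aemeasurable hYmean]
  field_simp
  ring

end ProbabilityTheory

/-- **The semi-supervised estimator is never less efficient than the supervised one.**
For `𝓖W ⊆ 𝓖 ⊆ 𝓕`, square-integrable `𝓖`-measurable `φ` with `E[φ] = 0`, `g` a version of
`E[φ ∣ 𝓖W]`, and an MCAR labeling indicator `R ∈ {0,1}` with `E[R] = ρ ∈ (0,1)` and `σ(R)`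
independent of `𝓖`, the influence function `φ_SSL = g + (R/ρ)(φ − g)` satisfies
`ρ·Var(φ_SSL) ≤ Var(φ)`, with equality iff `g = 0` a.s. -/
theorem ssl_never_less_efficient
    {Ω : Type*} (𝓖 𝓖W : MeasurableSpace Ω) [mF : MeasurableSpace Ω]
    (P : Measure Ω) [IsProbabilityMeasure P]
    (h𝓖 : 𝓖 ≤ mF) (h𝓖W : 𝓖W ≤ 𝓖)
    (φ g : Ω → ℝ)
    (hφmeas : Measurable[𝓖] φ) (hφL2 : MemLp φ 2 P)
    (hφmean : ∫ ω, φ ω ∂P = 0)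
    (hgmeas : Measurable[𝓖W] g) (hg : g =ᵐ[P] P[φ|𝓖W])
    (ρ : ℝ) (hρ : ρ ∈ Set.Ioo (0 : ℝ) 1)
    (R : Ω → ℝ) (hRmeas : Measurable R) (hRbin : ∀ ω, R ω = 0 ∨ R ω = 1)
    (hRmean : ∫ ω, R ω ∂P = ρ)
    (hindep : Indep (MeasurableSpace.comap R inferInstance) 𝓖 P) :
    ρ * variance (fun ω => g ω + (R ω / ρ) * (φ ω - g ω)) P ≤ variance φ P ∧
    (ρ * variance (fun ω => g ω + (R ω / ρ) * (φ ω - g ω)) P = variance φ P ↔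
      g =ᵐ[P] (fun _ => (0 : ℝ))) := by
  obtain ⟨hρ0, hρ1⟩ := hρ
  have hm : 𝓖W ≤ mF := h𝓖W.trans h𝓖
  have hgL2 : MemLp g 2 P := (hφL2.condExp one_le_two).ae_eq hg.symm
  have hg𝓖 : Measurable[𝓖] g := hgmeas.mono h𝓖W le_rfl
  have horth : cov[g, φ - g; P] = 0 := covariance_sub_eq_zero_of_ae_eq_condExp hm hφL2 hg
  have hvarφ : Var[φ; P] = Var[g; P] + Var[φ - g; P] := by
    simpa [horth] using variance_add hgL2 (hφL2.sub hgL2)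
  have hvarS : Var[fun ω ↦ g ω + R ω / ρ * (φ ω - g ω); P] =
      Var[g; P] + ρ⁻¹ * Var[φ - g; P] := by
    simpa [horth] using variance_add_div_mul_of_indepFun hρ0.ne' hRmeas hRbin hRmean
      (indepFun_of_indep_comap hindep (hφmeas.sub hg𝓖))
      (indepFun_of_indep_comap hindep (hg𝓖.mul (hφmeas.sub hg𝓖))) hgL2 (hφL2.sub hgL2)
      (integral_sub_eq_zero_of_ae_eq_condExp hm (hφL2.integrable one_le_two) hg)
  have hgmean : P[g] = 0 := by rw [integral_congr_ae hg, integral_condExp hm, hφmean]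
  have hgain : ρ * Var[fun ω ↦ g ω + R ω / ρ * (φ ω - g ω); P] =
      Var[φ; P] - (1 - ρ) * Var[g; P] := by
    rw [hvarS, hvarφ]; field_simp; ring
  have hρ1' : 1 - ρ ≠ 0 := by linarith
  rw [hgain, sub_eq_self, mul_eq_zero, or_iff_right hρ1',
    variance_eq_zero_iff_of_integral_eq_zero hgL2 hgmean]
  exact ⟨by nlinarith [variance_nonneg g P], Iff.rfl⟩
end
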